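/- arXiv:1304.4907 — 7 statements merged into one kernel-verified Lean document; each statement's English description precedes it below -/
import Mathlib

section
/- The number of alternating Motzkin paths of length 2k with exactly a rises equals the Narayana number N(k,a) = (1/(a+1)) * C(k,a) * C(k-1,a). -/
/-!
Encode an alternating path by the pair `(R, F)` of subsets of `{0, …, k-1}` with `j ∈ R` when
step `2j+2` rises and `j ∈ F` when step `2j+1` falls. Staying nonnegative becomes the ballot
condition `#{f ∈ F | f ≤ t} ≤ #{r ∈ R | r < t}` for all `t`, which forces `R ⊆ {0, …, k-2}`.
Among the `C(k-1,a) C(k,a)` pairs of `a`-sets with that property, the ones violating the ballot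
condition are in bijection with the `C(k-1,a-1) C(k,a+1)` pairs of sizes `(a-1, a+1)`: reflect the
height profile after its first visit to `-1`. The difference of the two products is `N(k,a)`.
-/

/-- A step encoding: `p i : Fin 3`, with step value `(p i : ℤ) - 1 ∈ {-1, 0, 1}`
(fall, level, rise).  Steps are 1-indexed in the paper, so the step at index
`i : Fin (2*k)` is step number `i+1`; "rises only on even steps" means
`(p i : ℤ) - 1 = 1 → Odd i.1`, and "falls only on odd steps" means
`(p i : ℤ) - 1 = -1 → Even i.1`.  The path must stay at nonnegative height and
return to height 0. -/
def IsAltMotzkin (k : ℕ) (p : Fin (2 * k) → Fin 3) : Prop :=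
  (∀ i, ((p i : ℤ) - 1 = 1 → Odd i.1) ∧ ((p i : ℤ) - 1 = -1 → Even i.1)) ∧
  (∀ j : Fin (2 * k), 0 ≤ ∑ i ∈ Finset.univ.filter (fun i => i ≤ j), ((p i : ℤ) - 1)) ∧
  (∑ i, ((p i : ℤ) - 1)) = 0

namespace AltMotzkin

open Finset

def below (S : Finset ℕ) (t : ℕ) : ℕ := #(S ∩ range t)

lemma below_zero (S : Finset ℕ) : below S 0 = 0 := by simp [below]

lemma below_succ (S : Finset ℕ) (t : ℕ) :
    below S (t + 1) = below S t + if t ∈ S then 1 else 0 := by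
  unfold below
  split_ifs with h
  · rw [range_add_one, inter_insert_of_mem h, card_insert_of_notMem (by simp)]
  · rw [range_add_one, inter_insert_of_notMem h, add_zero]

lemma below_le_card (S : Finset ℕ) (t : ℕ) : below S t ≤ #S :=
  card_le_card inter_subset_left

lemma below_eq_card_iff {S : Finset ℕ} {t : ℕ} : below S t = #S ↔ S ⊆ range t := by
  rw [below, ← inter_eq_left]
  exact ⟨fun h => eq_of_subset_of_card_le inter_subset_left h.ge, fun h => by rw [h]⟩

/-- For the pair `z = (R, F)` encoding a path, this is the height after step `2t+1`. -/
def height (z : Finset ℕ × Finset ℕ) (t : ℕ) : ℤ := below z.1 t - below z.2 (t + 1)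

lemma height_zero (z : Finset ℕ × Finset ℕ) : height z 0 = -if 0 ∈ z.2 then 1 else 0 := by
  simp [height, below_succ, below_zero]

lemma height_succ (z : Finset ℕ × Finset ℕ) (t : ℕ) :
    height z (t + 1) =
      height z t + (if t ∈ z.1 then 1 else 0) - if t + 1 ∈ z.2 then 1 else 0 := by
  simp only [height, below_succ]
  push_cast
  ring

lemma neg_one_le_height_zero (z : Finset ℕ × Finset ℕ) : -1 ≤ height z 0 := by
  rw [height_zero]
  split_ifs <;> norm_num

lemma height_sub_one_le_height_succ (z : Finset ℕ × Finset ℕ) (t : ℕ) :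
    height z t - 1 ≤ height z (t + 1) := by
  rw [height_succ]
  split_ifs <;> linarith

lemma height_of_subset_range {z : Finset ℕ × Finset ℕ} {t : ℕ} (h₁ : z.1 ⊆ range t)
    (h₂ : z.2 ⊆ range (t + 1)) : height z t = #z.1 - #z.2 := by
  rw [height, below_eq_card_iff.mpr h₁, below_eq_card_iff.mpr h₂]

section Reflection

/-- Exchanges rises and falls after step `2j+1`, shifting each by one step so that the parity
constraint survives; by `height_reflect_of_ge` this reflects the height profile about its value
at `j`. -/
def reflect (j : ℕ) (z : Finset ℕ × Finset ℕ) : Finset ℕ × Finset ℕ :=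
  (z.1 ∩ range j ∪ (z.2 \ range (j + 1)).image (· - 1),
   z.2 ∩ range (j + 1) ∪ (z.1 \ range j).image (· + 1))

variable {j : ℕ} {z : Finset ℕ × Finset ℕ}

lemma mem_reflect_fst {x : ℕ} :
    x ∈ (reflect j z).1 ↔ x < j ∧ x ∈ z.1 ∨ j ≤ x ∧ x + 1 ∈ z.2 := by
  simp only [reflect, mem_union, mem_inter, mem_sdiff, mem_range, mem_image]
  constructor
  · rintro (h | ⟨y, ⟨hy, hjy⟩, rfl⟩)
    · exact Or.inl h.symm
    · exact Or.inr ⟨by omega, by rwa [Nat.sub_add_cancel (by omega)]⟩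
  · rintro (h | ⟨hjx, hx⟩)
    · exact Or.inl h.symm
    · exact Or.inr ⟨x + 1, ⟨hx, by omega⟩, rfl⟩

lemma mem_reflect_snd {x : ℕ} :
    x ∈ (reflect j z).2 ↔ x ≤ j ∧ x ∈ z.2 ∨ j < x ∧ x - 1 ∈ z.1 := by
  simp only [reflect, mem_union, mem_inter, mem_sdiff, mem_range, mem_image]
  constructor
  · rintro (h | ⟨y, ⟨hy, hjy⟩, rfl⟩)
    · exact Or.inl ⟨by omega, h.1⟩
    · exact Or.inr ⟨by omega, by simpa using hy⟩
  · rintro (h | ⟨hjx, hx⟩)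
    · exact Or.inl ⟨h.2, by omega⟩
    · exact Or.inr ⟨x - 1, ⟨hx, by omega⟩, by omega⟩

lemma reflect_reflect (j : ℕ) (z : Finset ℕ × Finset ℕ) : reflect j (reflect j z) = z := by
  ext x
  · simp only [mem_reflect_fst, mem_reflect_snd]
    rcases lt_or_ge x j with h | h
    · simp [h, Nat.not_le.mpr h]
    · simp [h, Nat.not_lt.mpr h, Nat.lt_succ_of_le h]
  · simp only [mem_reflect_fst, mem_reflect_snd]
    rcases le_or_gt x j with h | h
    · simp [h, Nat.not_lt.mpr h]
    · have : j ≤ x - 1 := by omega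
      simp [h, Nat.not_le.mpr h, this, Nat.sub_add_cancel (show 1 ≤ x by omega)]

lemma card_reflect_fst (j : ℕ) (z : Finset ℕ × Finset ℕ) :
    #(reflect j z).1 + below z.2 (j + 1) = below z.1 j + #z.2 := by
  have hdisj : Disjoint (z.1 ∩ range j) ((z.2 \ range (j + 1)).image (· - 1)) := by
    simp only [disjoint_left, mem_inter, mem_sdiff, mem_range, mem_image]
    rintro x ⟨-, hx⟩ ⟨y, ⟨-, hy⟩, rfl⟩
    omega
  have hinj : Set.InjOn (· - 1) ↑(z.2 \ range (j + 1)) := by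
    intro x hx y hy hxy
    simp only [coe_sdiff, coe_range, Set.mem_sdiff, Set.mem_Iio] at hx hy
    simp only at hxy
    omega
  rw [reflect, card_union_of_disjoint hdisj, card_image_of_injOn hinj, below, below,
    ← card_inter_add_card_sdiff z.2 (range (j + 1))]
  ring

lemma card_reflect_snd (j : ℕ) (z : Finset ℕ × Finset ℕ) :
    #(reflect j z).2 + below z.1 j = below z.2 (j + 1) + #z.1 := by
  have hdisj : Disjoint (z.2 ∩ range (j + 1)) ((z.1 \ range j).image (· + 1)) := by
    simp only [disjoint_left, mem_inter, mem_sdiff, mem_range, mem_image]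
    rintro x ⟨-, hx⟩ ⟨y, ⟨-, hy⟩, rfl⟩
    omega
  rw [reflect, card_union_of_disjoint hdisj, card_image_of_injective _ (add_left_injective 1),
    below, below, ← card_inter_add_card_sdiff z.1 (range j)]
  ring

lemma height_reflect_of_le {t : ℕ} (h : t ≤ j) : height (reflect j z) t = height z t := by
  induction t with
  | zero => simp [height_zero, mem_reflect_snd]
  | succ t ih =>
    rw [height_succ, height_succ, ih (by omega)]
    simp [mem_reflect_fst, mem_reflect_snd, show t < j by omega, show t + 1 ≤ j from h,
      show ¬ j ≤ t by omega]

lemma height_reflect_of_ge {t : ℕ} (h : j ≤ t) :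
    height (reflect j z) t = 2 * height z j - height z t := by
  induction t, h using Nat.le_induction with
  | base => rw [height_reflect_of_le le_rfl]; ring
  | succ t hjt ih =>
    rw [height_succ, height_succ, ih]
    simp [mem_reflect_fst, mem_reflect_snd, hjt, Nat.not_lt.mpr hjt, Nat.lt_succ_of_le hjt]
    split_ifs <;> ring

lemma reflect_subset_range {n : ℕ} (h₁ : z.1 ⊆ range n) (h₂ : z.2 ⊆ range (n + 1)) :
    (reflect j z).1 ⊆ range n ∧ (reflect j z).2 ⊆ range (n + 1) := by
  constructor
  · intro x hx
    rcases mem_reflect_fst.mp hx with ⟨-, hx⟩ | ⟨-, hx⟩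
    · exact h₁ hx
    · have := mem_range.mp (h₂ hx)
      exact mem_range.mpr (by omega)
  · intro x hx
    rcases mem_reflect_snd.mp hx with ⟨-, hx⟩ | ⟨hjx, hx⟩
    · exact h₂ hx
    · have := mem_range.mp (h₁ hx)
      exact mem_range.mpr (by omega)

noncomputable def firstNeg (z : Finset ℕ × Finset ℕ) : ℕ := sInf {t | height z t < 0}

lemma height_firstNeg_lt (h : ∃ t, height z t < 0) : height z (firstNeg z) < 0 :=
  Nat.sInf_mem h

lemma height_nonneg_of_lt_firstNeg {t : ℕ} (h : t < firstNeg z) : 0 ≤ height z t :=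
  not_lt.mp (Nat.notMem_of_lt_sInf h)

/-- The height moves by at most one per step, so it first goes negative at `-1`. -/
lemma height_firstNeg (h : ∃ t, height z t < 0) : height z (firstNeg z) = -1 := by
  suffices -1 ≤ height z (firstNeg z) by linarith [height_firstNeg_lt h]
  cases hs : firstNeg z with
  | zero => exact neg_one_le_height_zero z
  | succ s =>
    have := height_nonneg_of_lt_firstNeg (show s < firstNeg z by omega)
    linarith [height_sub_one_le_height_succ z s]

lemma firstNeg_reflect (h : ∃ t, height z t < 0) :
    firstNeg (reflect (firstNeg z) z) = firstNeg z := by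
  have hneg : height (reflect (firstNeg z) z) (firstNeg z) < 0 := by
    rw [height_reflect_of_le le_rfl]
    exact height_firstNeg_lt h
  refine le_antisymm (Nat.sInf_le hneg) (not_lt.mp fun hlt => ?_)
  have := height_firstNeg_lt ⟨_, hneg⟩
  rw [height_reflect_of_le hlt.le] at this
  exact (height_nonneg_of_lt_firstNeg hlt).not_gt this

noncomputable def reflectAtFirstNeg (z : Finset ℕ × Finset ℕ) : Finset ℕ × Finset ℕ :=
  reflect (firstNeg z) z

lemma reflectAtFirstNeg_reflectAtFirstNeg (h : ∃ t, height z t < 0) :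
    reflectAtFirstNeg (reflectAtFirstNeg z) = z := by
  rw [reflectAtFirstNeg, reflectAtFirstNeg, firstNeg_reflect h, reflect_reflect]

end Reflection

section Counting

variable {z : Finset ℕ × Finset ℕ}

def pairs (n r f : ℕ) : Finset (Finset ℕ × Finset ℕ) :=
  (range n).powersetCard r ×ˢ (range (n + 1)).powersetCard f

open Classical in
noncomputable def badPairs (n r f : ℕ) : Finset (Finset ℕ × Finset ℕ) :=
  (pairs n r f).filter fun z => ∃ t, height z t < 0

lemma mem_pairs {n r f : ℕ} :
    z ∈ pairs n r f ↔ (z.1 ⊆ range n ∧ #z.1 = r) ∧ (z.2 ⊆ range (n + 1) ∧ #z.2 = f) := by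
  rw [pairs, mem_product, mem_powersetCard, mem_powersetCard]

open Classical in
lemma mem_badPairs {n r f : ℕ} : z ∈ badPairs n r f ↔ z ∈ pairs n r f ∧ ∃ t, height z t < 0 :=
  mem_filter

lemma card_pairs (n r f : ℕ) : #(pairs n r f) = n.choose r * (n + 1).choose f := by
  rw [pairs, card_product, card_powersetCard, card_powersetCard, card_range, card_range]

lemma reflectAtFirstNeg_mem_badPairs {n r f : ℕ} (hz : z ∈ badPairs n r (f + 1)) :
    reflectAtFirstNeg z ∈ badPairs n f (r + 1) := by
  rw [mem_badPairs, mem_pairs] at hz ⊢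
  obtain ⟨⟨⟨h₁, hr⟩, h₂, hf⟩, hbad⟩ := hz
  have hj := height_firstNeg hbad
  have hc₁ := card_reflect_fst (firstNeg z) z
  have hc₂ := card_reflect_snd (firstNeg z) z
  rw [height] at hj
  rw [reflectAtFirstNeg]
  refine ⟨⟨⟨(reflect_subset_range h₁ h₂).1, by omega⟩, (reflect_subset_range h₁ h₂).2, by omega⟩,
    firstNeg z, ?_⟩
  rw [height_reflect_of_le le_rfl, height_firstNeg hbad]
  norm_num

lemma card_badPairs_swap (n r f : ℕ) : #(badPairs n r (f + 1)) = #(badPairs n f (r + 1)) :=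
  card_nbij' reflectAtFirstNeg reflectAtFirstNeg
    (fun _ hz => reflectAtFirstNeg_mem_badPairs hz)
    (fun _ hz => reflectAtFirstNeg_mem_badPairs hz)
    (fun _ hz => reflectAtFirstNeg_reflectAtFirstNeg (mem_badPairs.mp hz).2)
    (fun _ hz => reflectAtFirstNeg_reflectAtFirstNeg (mem_badPairs.mp hz).2)

lemma badPairs_eq_pairs {n r f : ℕ} (h : r < f) : badPairs n r f = pairs n r f := by
  ext z
  rw [mem_badPairs, and_iff_left_iff_imp]
  intro hz
  obtain ⟨⟨h₁, hr⟩, h₂, hf⟩ := mem_pairs.mp hz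
  exact ⟨n, by rw [height_of_subset_range h₁ h₂]; omega⟩

open Classical in
noncomputable def goodPairs (k a : ℕ) : Finset (Finset ℕ × Finset ℕ) :=
  ((range k).powersetCard a ×ˢ (range k).powersetCard a).filter fun z => ∀ t, 0 ≤ height z t

open Classical in
lemma mem_goodPairs {k a : ℕ} : z ∈ goodPairs k a ↔
    (z.1 ⊆ range k ∧ #z.1 = a) ∧ (z.2 ⊆ range k ∧ #z.2 = a) ∧ ∀ t, 0 ≤ height z t := by
  rw [goodPairs, mem_filter, mem_product, mem_powersetCard, mem_powersetCard, and_assoc]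

lemma subset_range_of_height_nonneg {n : ℕ} (h₂ : z.2 ⊆ range (n + 1)) (hcard : #z.2 = #z.1)
    (h : 0 ≤ height z n) : z.1 ⊆ range n := by
  rw [height, below_eq_card_iff.mpr h₂] at h
  apply below_eq_card_iff.mp
  have := below_le_card z.1 n
  omega

lemma goodPairs_succ (n a : ℕ) : goodPairs (n + 1) a = pairs n a a \ badPairs n a a := by
  ext z
  simp only [mem_goodPairs, mem_sdiff, mem_badPairs, mem_pairs, not_and, not_exists, not_lt]
  constructor
  · rintro ⟨⟨-, hr⟩, ⟨h₂, hf⟩, hh⟩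
    have h₁ : z.1 ⊆ range n := subset_range_of_height_nonneg h₂ (by omega) (hh n)
    exact ⟨⟨⟨h₁, hr⟩, h₂, hf⟩, fun _ => hh⟩
  · rintro ⟨⟨⟨h₁, hr⟩, h₂, hf⟩, hh⟩
    exact ⟨⟨h₁.trans (range_subset_range.mpr n.le_succ), hr⟩, ⟨h₂, hf⟩, hh ⟨⟨h₁, hr⟩, h₂, hf⟩⟩

lemma card_goodPairs_succ_succ (n f : ℕ) :
    #(goodPairs (n + 1) (f + 1)) =
      n.choose (f + 1) * (n + 1).choose (f + 1) - n.choose f * (n + 1).choose (f + 2) := by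
  rw [goodPairs_succ, card_sdiff_of_subset fun _ hz => (mem_badPairs.mp hz).1,
    card_badPairs_swap, badPairs_eq_pairs (by omega), card_pairs, card_pairs]

lemma choose_mul_choose_eq_mul_sub (n f : ℕ) :
    (n + 1).choose (f + 1) * n.choose (f + 1) =
      (f + 2) * (n.choose (f + 1) * (n + 1).choose (f + 1) -
        n.choose f * (n + 1).choose (f + 2)) := by
  have key : (f + 2) * (n.choose f * (n + 1).choose (f + 2)) =
      (f + 1) * (n.choose (f + 1) * (n + 1).choose (f + 1)) := by
    have h₁ := Nat.add_one_mul_choose_eq n (f + 1)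
    have h₂ := Nat.add_one_mul_choose_eq n f
    calc (f + 2) * (n.choose f * (n + 1).choose (f + 2))
        = n.choose f * ((n + 1).choose (f + 1 + 1) * (f + 1 + 1)) := by ring
      _ = n.choose (f + 1) * ((n + 1).choose (f + 1) * (f + 1)) := by rw [← h₁, ← h₂]; ring
      _ = _ := by ring
  rw [Nat.mul_sub, key, ← Nat.sub_mul, show f + 2 - (f + 1) = 1 by omega, one_mul, mul_comm]

theorem card_goodPairs (k a : ℕ) :
    #(goodPairs k a) = k.choose a * (k - 1).choose a / (a + 1) := by
  rcases a with _ | f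
  · classical
    rw [goodPairs, filter_true_of_mem] <;> simp [height, below]
  rcases k with _ | n
  · rw [goodPairs, powersetCard_eq_empty.mpr (by simp)]
    simp
  · rw [card_goodPairs_succ_succ, Nat.add_sub_cancel, choose_mul_choose_eq_mul_sub,
      Nat.mul_div_cancel_left _ (by omega)]

end Counting

section Paths

variable {k : ℕ} {z : Finset ℕ × Finset ℕ}

def step (z : Finset ℕ × Finset ℕ) (n : ℕ) : ℤ :=
  if Odd n then (if n / 2 ∈ z.1 then 1 else 0) else -if n / 2 ∈ z.2 then 1 else 0

lemma step_eq_one_iff {n : ℕ} : step z n = 1 ↔ Odd n ∧ n / 2 ∈ z.1 := by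
  unfold step
  split_ifs <;> simp_all

lemma step_eq_neg_one_iff {n : ℕ} : step z n = -1 ↔ Even n ∧ n / 2 ∈ z.2 := by
  unfold step
  split_ifs <;> simp_all [← Nat.not_odd_iff_even]

lemma step_two_mul (z : Finset ℕ × Finset ℕ) (t : ℕ) :
    step z (2 * t) = -if t ∈ z.2 then 1 else 0 := by
  simp [step]

lemma step_two_mul_add_one (z : Finset ℕ × Finset ℕ) (t : ℕ) :
    step z (2 * t + 1) = if t ∈ z.1 then 1 else 0 := by
  simp [step, Nat.mul_add_div]

lemma sum_range_two_mul_step (z : Finset ℕ × Finset ℕ) (t : ℕ) :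
    ∑ n ∈ range (2 * t), step z n = below z.1 t - below z.2 t := by
  induction t with
  | zero => simp [below_zero]
  | succ t ih =>
    rw [show 2 * (t + 1) = 2 * t + 1 + 1 by ring, sum_range_succ, sum_range_succ, ih,
      below_succ, below_succ, step_two_mul, step_two_mul_add_one]
    push_cast
    ring

lemma sum_range_step_two_mul_add_one (z : Finset ℕ × Finset ℕ) (t : ℕ) :
    ∑ n ∈ range (2 * t + 1), step z n = height z t := by
  rw [sum_range_succ, sum_range_two_mul_step, height, below_succ, step_two_mul]
  push_cast
  ring

lemma sum_range_step_two_mul_add_two (z : Finset ℕ × Finset ℕ) (t : ℕ) :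
    ∑ n ∈ range (2 * t + 2), step z n = height z t + if t ∈ z.1 then 1 else 0 := by
  rw [sum_range_succ, sum_range_step_two_mul_add_one, step_two_mul_add_one]

/-- Odd-length prefixes end on a fall or level step, so they are the lowest ones. -/
lemma sum_range_step_nonneg_iff :
    (∀ j < 2 * k, 0 ≤ ∑ n ∈ range (j + 1), step z n) ↔ ∀ t < k, 0 ≤ height z t := by
  constructor
  · intro h t ht
    simpa [sum_range_step_two_mul_add_one] using h (2 * t) (by omega)
  · intro h j hj
    obtain ⟨t, rfl | rfl⟩ := Nat.even_or_odd' j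
    · rw [sum_range_step_two_mul_add_one]
      exact h t (by omega)
    · rw [sum_range_step_two_mul_add_two]
      have := h t (by omega)
      split_ifs <;> omega

lemma sum_filter_le_eq_sum_range {M : Type*} [AddCommMonoid M] {m : ℕ} (f : ℕ → M)
    (j : Fin m) : ∑ i ∈ univ.filter (· ≤ j), f i = ∑ n ∈ range (j + 1), f n := by
  have : (univ.filter (· ≤ j)).map Fin.valEmbedding = range (j + 1) := by
    ext n
    simp only [mem_map, mem_filter, mem_univ, true_and, Fin.valEmbedding_apply, mem_range]
    exact ⟨fun ⟨i, hi, hin⟩ => hin ▸ Nat.lt_succ_of_le hi,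
      fun hn => ⟨⟨n, by omega⟩, Fin.le_def.mpr (Nat.le_of_lt_succ hn), rfl⟩⟩
  rw [← this, sum_map]
  rfl

def pathOf (k : ℕ) (z : Finset ℕ × Finset ℕ) (i : Fin (2 * k)) : Fin 3 :=
  if Odd i.1 then (if i.1 / 2 ∈ z.1 then 2 else 1) else (if i.1 / 2 ∈ z.2 then 0 else 1)

lemma pathOf_sub_one (k : ℕ) (z : Finset ℕ × Finset ℕ) (i : Fin (2 * k)) :
    (pathOf k z i : ℤ) - 1 = step z i := by
  unfold pathOf step
  split_ifs <;> rfl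

def StepsAlternate (k : ℕ) (p : Fin (2 * k) → Fin 3) : Prop :=
  ∀ i, ((p i : ℤ) - 1 = 1 → Odd i.1) ∧ ((p i : ℤ) - 1 = -1 → Even i.1)

lemma stepsAlternate_pathOf (k : ℕ) (z : Finset ℕ × Finset ℕ) :
    StepsAlternate k (pathOf k z) := fun i => by
  simp only [pathOf_sub_one, step_eq_one_iff, step_eq_neg_one_iff]
  exact ⟨And.left, And.left⟩

lemma isAltMotzkin_pathOf_iff (h₁ : z.1 ⊆ range k) (h₂ : z.2 ⊆ range k) :
    IsAltMotzkin k (pathOf k z) ↔ (∀ t, 0 ≤ height z t) ∧ #z.1 = #z.2 := by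
  have htotal : ∑ i, ((pathOf k z i : ℤ) - 1) = #z.1 - #z.2 := by
    simp only [pathOf_sub_one]
    rw [Fin.sum_univ_eq_sum_range (step z), sum_range_two_mul_step, below_eq_card_iff.mpr h₁,
      below_eq_card_iff.mpr h₂]
  have hprefix : (∀ j : Fin (2 * k), 0 ≤ ∑ i ∈ univ.filter (· ≤ j), ((pathOf k z i : ℤ) - 1)) ↔
      ∀ t < k, 0 ≤ height z t := by
    simp only [pathOf_sub_one, sum_filter_le_eq_sum_range (step z), ← sum_range_step_nonneg_iff]
    exact ⟨fun h j hj => h ⟨j, hj⟩, fun h j => h j j.2⟩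
  have hlarge : ∀ t, k ≤ t → height z t = #z.1 - #z.2 := fun t ht =>
    height_of_subset_range (h₁.trans (range_subset_range.mpr ht))
      (h₂.trans (range_subset_range.mpr (by omega)))
  rw [IsAltMotzkin, hprefix, htotal, sub_eq_zero, Nat.cast_inj]
  constructor
  · rintro ⟨-, hh, hcard⟩
    refine ⟨fun t => ?_, hcard⟩
    rcases lt_or_ge t k with ht | ht
    · exact hh t ht
    · rw [hlarge t ht, hcard, sub_self]
  · rintro ⟨hh, hcard⟩
    exact ⟨stepsAlternate_pathOf k z, fun t _ => hh t, hcard⟩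

def risesOf (p : Fin (2 * k) → Fin 3) : Finset ℕ :=
  (univ.filter fun i => (p i : ℤ) - 1 = 1).image (·.1 / 2)

def fallsOf (p : Fin (2 * k) → Fin 3) : Finset ℕ :=
  (univ.filter fun i => (p i : ℤ) - 1 = -1).image (·.1 / 2)

variable {p : Fin (2 * k) → Fin 3}

lemma risesOf_subset_range : risesOf p ⊆ range k := by
  intro j hj
  obtain ⟨i, -, rfl⟩ := mem_image.mp hj
  exact mem_range.mpr (by omega)

lemma fallsOf_subset_range : fallsOf p ⊆ range k := by
  intro j hj
  obtain ⟨i, -, rfl⟩ := mem_image.mp hj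
  exact mem_range.mpr (by omega)

lemma card_risesOf (hp : StepsAlternate k p) :
    #(risesOf p) = #(univ.filter fun i => (p i : ℤ) - 1 = 1) := by
  refine card_image_of_injOn fun i hi i' hi' h => Fin.ext ?_
  obtain ⟨c, hc⟩ := (hp i).1 (mem_filter.mp hi).2
  obtain ⟨c', hc'⟩ := (hp i').1 (mem_filter.mp hi').2
  omega

lemma half_mem_risesOf_iff (hp : StepsAlternate k p) {i : Fin (2 * k)} (hi : Odd i.1) :
    i.1 / 2 ∈ risesOf p ↔ (p i : ℤ) - 1 = 1 := by
  refine ⟨fun h => ?_, fun h => mem_image.mpr ⟨i, mem_filter.mpr ⟨mem_univ _, h⟩, rfl⟩⟩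
  obtain ⟨i', hi', hii'⟩ := mem_image.mp h
  obtain ⟨c, hc⟩ := (hp i').1 (mem_filter.mp hi').2
  obtain ⟨d, hd⟩ := hi
  rw [show i = i' from Fin.ext (by omega)]
  exact (mem_filter.mp hi').2

lemma half_mem_fallsOf_iff (hp : StepsAlternate k p) {i : Fin (2 * k)} (hi : Even i.1) :
    i.1 / 2 ∈ fallsOf p ↔ (p i : ℤ) - 1 = -1 := by
  refine ⟨fun h => ?_, fun h => mem_image.mpr ⟨i, mem_filter.mpr ⟨mem_univ _, h⟩, rfl⟩⟩
  obtain ⟨i', hi', hii'⟩ := mem_image.mp h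
  obtain ⟨c, hc⟩ := (hp i').2 (mem_filter.mp hi').2
  obtain ⟨d, hd⟩ := hi
  rw [show i = i' from Fin.ext (by omega)]
  exact (mem_filter.mp hi').2

lemma pathOf_risesOf_fallsOf (hp : StepsAlternate k p) :
    pathOf k (risesOf p, fallsOf p) = p := by
  funext i
  have hlt := (p i).isLt
  obtain ⟨hrise, hfall⟩ := hp i
  apply Fin.ext
  by_cases hi : Odd i.1
  · have hfall' := mt hfall (Nat.not_even_iff_odd.mpr hi)
    simp only [pathOf, if_pos hi, half_mem_risesOf_iff hp hi]
    split_ifs <;> simp only [Fin.val_two, Fin.val_one] <;> omega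
  · have hrise' := mt hrise hi
    simp only [pathOf, if_neg hi, half_mem_fallsOf_iff hp (Nat.not_odd_iff_even.mp hi)]
    split_ifs <;> simp only [Fin.val_zero, Fin.val_one] <;> omega

lemma risesOf_pathOf (h : z.1 ⊆ range k) : risesOf (pathOf k z) = z.1 := by
  ext j
  simp only [risesOf, mem_image, mem_filter, mem_univ, true_and, pathOf_sub_one, step_eq_one_iff]
  constructor
  · rintro ⟨i, ⟨-, hi⟩, rfl⟩
    exact hi
  · intro hj
    have := mem_range.mp (h hj)
    exact ⟨⟨2 * j + 1, by omega⟩, ⟨odd_two_mul_add_one j, by simpa [Nat.mul_add_div]⟩,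
      by simp [Nat.mul_add_div]⟩

lemma fallsOf_pathOf (h : z.2 ⊆ range k) : fallsOf (pathOf k z) = z.2 := by
  ext j
  simp only [fallsOf, mem_image, mem_filter, mem_univ, true_and, pathOf_sub_one,
    step_eq_neg_one_iff]
  constructor
  · rintro ⟨i, ⟨-, hi⟩, rfl⟩
    exact hi
  · intro hj
    have := mem_range.mp (h hj)
    exact ⟨⟨2 * j, by omega⟩, ⟨even_two_mul j, by simpa⟩, by simp⟩

theorem card_altMotzkin_eq_card_goodPairs (k a : ℕ) :
    Nat.card {p : Fin (2 * k) → Fin 3 // IsAltMotzkin k p ∧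
        #(univ.filter fun i => (p i : ℤ) - 1 = 1) = a} = #(goodPairs k a) := by
  rw [← Nat.card_eq_finsetCard]
  symm
  refine Nat.card_eq_of_bijective (fun z => ⟨pathOf k z.1, ?_⟩) ⟨fun z z' h => ?_, fun p => ?_⟩
  · obtain ⟨⟨h₁, hr⟩, ⟨h₂, hf⟩, hh⟩ := mem_goodPairs.mp z.2
    refine ⟨(isAltMotzkin_pathOf_iff h₁ h₂).mpr ⟨hh, hr.trans hf.symm⟩, ?_⟩
    rw [← card_risesOf (stepsAlternate_pathOf k _), risesOf_pathOf h₁, hr]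
  · obtain ⟨⟨h₁, -⟩, ⟨h₂, -⟩, -⟩ := mem_goodPairs.mp z.2
    obtain ⟨⟨h₁', -⟩, ⟨h₂', -⟩, -⟩ := mem_goodPairs.mp z'.2
    have h : pathOf k z.1 = pathOf k z'.1 := congrArg Subtype.val h
    refine Subtype.ext (Prod.ext ?_ ?_)
    · rw [← risesOf_pathOf h₁, ← risesOf_pathOf h₁', h]
    · rw [← fallsOf_pathOf h₂, ← fallsOf_pathOf h₂', h]
  · obtain ⟨p, hp, ha⟩ := p
    have hpath := pathOf_risesOf_fallsOf hp.1
    have hz := (isAltMotzkin_pathOf_iff (z := (risesOf p, fallsOf p))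
      risesOf_subset_range fallsOf_subset_range).mp (by rw [hpath]; exact hp)
    have hr : #(risesOf p) = a := (card_risesOf hp.1).trans ha
    exact ⟨⟨_, mem_goodPairs.mpr ⟨⟨risesOf_subset_range, hr⟩,
      ⟨fallsOf_subset_range, hz.2 ▸ hr⟩, hz.1⟩⟩, Subtype.ext hpath⟩

end Paths

end AltMotzkin

/-- The number of alternating Motzkin paths of length `2k` with exactly `a`
rises equals the Narayana number `N(k,a) = C(k,a) * C(k-1,a) / (a+1)`. -/
theorem stmt1 (k a : ℕ) :
    Nat.card {p : Fin (2 * k) → Fin 3 // IsAltMotzkin k p ∧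
        (Finset.univ.filter (fun i => (p i : ℤ) - 1 = 1)).card = a}
      = k.choose a * (k - 1).choose a / (a + 1) := by
  rw [AltMotzkin.card_altMotzkin_eq_card_goodPairs, AltMotzkin.card_goodPairs]
end

section
/- There is a bijection between alternating Motzkin paths of length 2k with a rises and ballot sequences of length 2k with exactly a entries equal to 1 at even positions and k − a entries equal to 1 at odd positions; consequently the number of such ballot sequences is the Narayana number N(k,a). -/
/-- Ballot sequence: `x i = true` encodes `+1`, `x i = false` encodes `-1`;
all partial sums nonnegative and total sum `0`. -/
def IsBallot (k : ℕ) (x : Fin (2 * k) → Bool) : Prop :=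
  (∀ j : Fin (2 * k), 0 ≤ ∑ i ∈ Finset.univ.filter (fun i => i ≤ j),
      (if x i then (1 : ℤ) else -1)) ∧
  (∑ i, (if x i then (1 : ℤ) else -1)) = 0

open Finset

namespace Narayana

def prefixCard (X : Finset ℕ) (n : ℕ) : ℕ := #{i ∈ X | i < n}

def Dominates (A B : Finset ℕ) : Prop := ∀ n, prefixCard B n ≤ prefixCard A n

def StrictlyDominates (A B : Finset ℕ) : Prop := ∀ n, prefixCard B (n + 1) ≤ prefixCard A n

@[simp] theorem prefixCard_zero (X : Finset ℕ) : prefixCard X 0 = 0 := by simp [prefixCard]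

theorem prefixCard_mono (X : Finset ℕ) : Monotone (prefixCard X) := fun _ _ h =>
  card_le_card (monotone_filter_right _ fun _ _ hi => hi.trans_le h)

theorem prefixCard_succ_le (X : Finset ℕ) (n : ℕ) :
    prefixCard X (n + 1) ≤ prefixCard X n + 1 := by
  refine (card_le_card fun i => ?_).trans (card_insert_le n _)
  simp only [mem_filter, mem_insert]
  grind

theorem prefixCard_of_subset_range {X : Finset ℕ} {m n : ℕ} (hX : X ⊆ range m) (h : m ≤ n) :
    prefixCard X n = #X :=
  congrArg card <| filter_true_of_mem fun _ hi => (mem_range.1 (hX hi)).trans_le h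

theorem prefixCard_image_add_one (X : Finset ℕ) (n : ℕ) :
    prefixCard (X.image (· + 1)) (n + 1) = prefixCard X n := by
  simp [prefixCard, filter_image, card_image_of_injective _ (add_left_injective 1)]

theorem not_dominates_of_card_lt {m : ℕ} {A B : Finset ℕ} (hA : A ⊆ range m) (hB : B ⊆ range m)
    (h : #A < #B) : ¬Dominates A B := fun hdom => by
  have := hdom m
  rw [prefixCard_of_subset_range hA le_rfl, prefixCard_of_subset_range hB le_rfl] at this
  omega

theorem zero_notMem_of_strictlyDominates {A B : Finset ℕ} (h : StrictlyDominates A B) :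
    0 ∉ B := fun h0 => by
  have := h 0
  rw [prefixCard_zero, Nat.le_zero, prefixCard, card_eq_zero, filter_eq_empty_iff] at this
  exact this h0 Nat.one_pos

theorem subset_range_of_dominates {m : ℕ} {A B : Finset ℕ} (hB : B ⊆ range m)
    (hcard : #A = #B) (h : Dominates A B) : A ⊆ range m := by
  have := h m
  rw [prefixCard_of_subset_range hB le_rfl, ← hcard, prefixCard] at this
  have hall := card_filter_eq_iff.1 (le_antisymm (card_filter_le _ _) this)
  exact fun i hi => mem_range.2 (hall i hi)

theorem strictlyDominates_image_add_one_iff {A B : Finset ℕ} :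
    StrictlyDominates A (B.image (· + 1)) ↔ Dominates A B := by
  simp only [StrictlyDominates, Dominates, prefixCard_image_add_one]

section Reflection

def swapTails (s : ℕ) (AB : Finset ℕ × Finset ℕ) : Finset ℕ × Finset ℕ :=
  ({i ∈ AB.1 | i < s} ∪ {i ∈ AB.2 | s ≤ i}, {i ∈ AB.2 | i < s} ∪ {i ∈ AB.1 | s ≤ i})

theorem swapTails_snd (s : ℕ) (AB : Finset ℕ × Finset ℕ) :
    (swapTails s AB).2 = (swapTails s AB.swap).1 := rfl

theorem swapTails_swapTails (s : ℕ) (AB : Finset ℕ × Finset ℕ) :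
    swapTails s (swapTails s AB) = AB := by
  ext i <;> simp only [swapTails, mem_union, mem_filter] <;> grind

theorem swapTails_fst_subset (s : ℕ) (AB : Finset ℕ × Finset ℕ) :
    (swapTails s AB).1 ⊆ AB.1 ∪ AB.2 :=
  union_subset_union (filter_subset _ _) (filter_subset _ _)

theorem prefixCard_swapTails_fst {s t : ℕ} (h : t ≤ s) (AB : Finset ℕ × Finset ℕ) :
    prefixCard (swapTails s AB).1 t = prefixCard AB.1 t := by
  unfold prefixCard swapTails
  congr 1
  ext i
  simp only [mem_filter, mem_union]
  grind

theorem card_swapTails_fst (s : ℕ) (AB : Finset ℕ × Finset ℕ) :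
    #(swapTails s AB).1 + prefixCard AB.2 s = prefixCard AB.1 s + #AB.2 := by
  have hdisj : Disjoint {i ∈ AB.1 | i < s} {i ∈ AB.2 | s ≤ i} :=
    disjoint_left.2 fun _ h₁ h₂ => by simp only [mem_filter] at h₁ h₂; omega
  have hsplit := card_filter_add_card_filter_not (s := AB.2) (· < s)
  simp only [not_lt] at hsplit
  rw [swapTails, card_union_of_disjoint hdisj, prefixCard, prefixCard]
  omega

/-- Meaningful only when `¬Dominates AB.1 AB.2`: otherwise the set is empty and `sInf` gives `0`. -/
noncomputable def firstExcess (AB : Finset ℕ × Finset ℕ) : ℕ :=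
  sInf {n | prefixCard AB.1 n < prefixCard AB.2 n}

noncomputable def reflect (AB : Finset ℕ × Finset ℕ) : Finset ℕ × Finset ℕ :=
  swapTails (firstExcess AB) AB

variable {AB : Finset ℕ × Finset ℕ}

theorem isLeast_firstExcess (h : ¬Dominates AB.1 AB.2) :
    IsLeast {n | prefixCard AB.1 n < prefixCard AB.2 n} (firstExcess AB) := by
  simp only [Dominates, not_forall, not_le] at h
  exact ⟨Nat.sInf_mem h, fun _ => Nat.sInf_le⟩

theorem prefixCard_snd_firstExcess (h : ¬Dominates AB.1 AB.2) :
    prefixCard AB.2 (firstExcess AB) = prefixCard AB.1 (firstExcess AB) + 1 := by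
  obtain ⟨hexcess, hmin⟩ := isLeast_firstExcess h
  obtain ⟨t, ht⟩ : ∃ t, firstExcess AB = t + 1 := by
    refine Nat.exists_eq_add_one.2 (Nat.pos_of_ne_zero fun h0 => ?_)
    simp [h0] at hexcess
  have hprev : ¬prefixCard AB.1 t < prefixCard AB.2 t := fun h' => by
    have := hmin h'
    omega
  have := prefixCard_succ_le AB.2 t
  have := prefixCard_mono AB.1 (Nat.le_add_right t 1)
  simp only [Set.mem_ofPred_eq, ht] at hexcess ⊢
  omega

theorem prefixCard_reflect {t : ℕ} (ht : t ≤ firstExcess AB) :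
    prefixCard (reflect AB).1 t = prefixCard AB.1 t ∧
      prefixCard (reflect AB).2 t = prefixCard AB.2 t := by
  rw [reflect, swapTails_snd, prefixCard_swapTails_fst ht, prefixCard_swapTails_fst ht]
  exact ⟨rfl, rfl⟩

theorem firstExcess_reflect (h : ¬Dominates AB.1 AB.2) :
    firstExcess (reflect AB) = firstExcess AB := by
  obtain ⟨hexcess, hmin⟩ := isLeast_firstExcess h
  have hsame {t : ℕ} (ht : t ≤ firstExcess AB) :
      prefixCard (reflect AB).1 t < prefixCard (reflect AB).2 t ↔
        prefixCard AB.1 t < prefixCard AB.2 t := by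
    rw [(prefixCard_reflect ht).1, (prefixCard_reflect ht).2]
  refine IsLeast.csInf_eq ⟨(hsame le_rfl).2 hexcess, fun t ht => ?_⟩
  by_contra! hlt
  exact absurd (hmin ((hsame hlt.le).1 ht)) (not_le.2 hlt)

theorem not_dominates_reflect (h : ¬Dominates AB.1 AB.2) :
    ¬Dominates (reflect AB).1 (reflect AB).2 := fun hdom => by
  have := hdom (firstExcess AB)
  rw [(prefixCard_reflect le_rfl).1, (prefixCard_reflect le_rfl).2] at this
  exact absurd (isLeast_firstExcess h).1 (not_lt.2 this)

theorem reflect_reflect (h : ¬Dominates AB.1 AB.2) : reflect (reflect AB) = AB := by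
  rw [reflect, firstExcess_reflect h, reflect, swapTails_swapTails]

theorem card_reflect (h : ¬Dominates AB.1 AB.2) :
    #(reflect AB).1 + 1 = #AB.2 ∧ #(reflect AB).2 = #AB.1 + 1 := by
  have h₁ := card_swapTails_fst (firstExcess AB) AB
  have h₂ := card_swapTails_fst (firstExcess AB) AB.swap
  have hexcess := prefixCard_snd_firstExcess h
  rw [← swapTails_snd] at h₂
  simp only [Prod.fst_swap, Prod.snd_swap] at h₂
  rw [reflect]
  omega

end Reflection

def pairs (m a b : ℕ) : Finset (Finset ℕ × Finset ℕ) :=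
  (range m).powersetCard a ×ˢ (range m).powersetCard b

theorem mem_pairs {m a b : ℕ} {AB : Finset ℕ × Finset ℕ} :
    AB ∈ pairs m a b ↔ (AB.1 ⊆ range m ∧ #AB.1 = a) ∧ (AB.2 ⊆ range m ∧ #AB.2 = b) := by
  simp only [pairs, mem_product, mem_powersetCard]

theorem card_pairs (m a b : ℕ) : #(pairs m a b) = m.choose a * m.choose b := by
  simp [pairs, card_product, card_powersetCard]

theorem reflect_mem_pairs {m a b : ℕ} {AB : Finset ℕ × Finset ℕ} (hAB : AB ∈ pairs m a (b + 1))
    (h : ¬Dominates AB.1 AB.2) : reflect AB ∈ pairs m b (a + 1) := by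
  obtain ⟨⟨hA, hAcard⟩, hB, hBcard⟩ := mem_pairs.1 hAB
  have hcard := card_reflect h
  refine mem_pairs.2 ⟨⟨?_, by omega⟩, ?_, by omega⟩
  · exact (swapTails_fst_subset _ _).trans (union_subset hA hB)
  · rw [reflect, swapTails_snd]
    exact (swapTails_fst_subset _ _).trans (union_subset hB hA)

theorem add_two_mul_choose_succ_mul_choose_succ (m b : ℕ) :
    (b + 2) * (m.choose (b + 1) * m.choose (b + 1)) =
      (m + 1).choose (b + 1) * m.choose (b + 1) + (b + 2) * (m.choose b * m.choose (b + 2)) := by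
  obtain hm | ⟨d, rfl⟩ : m < b + 1 ∨ ∃ d, m = b + 1 + d :=
    (lt_or_ge m (b + 1)).imp_right fun h => ⟨m - (b + 1), by omega⟩
  · simp [Nat.choose_eq_zero_of_lt hm, Nat.choose_eq_zero_of_lt (hm.trans (Nat.lt_succ_self _))]
  have r₁ := Nat.choose_succ_right_eq (b + 1 + d) b
  have r₂ := Nat.choose_succ_right_eq (b + 1 + d) (b + 1)
  rw [show b + 1 + d - b = d + 1 by omega] at r₁
  rw [show b + 1 + d - (b + 1) = d by omega] at r₂
  rw [Nat.choose_succ_succ']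
  zify at r₁ r₂ ⊢
  linear_combination ((b + 1 + d).choose (b + 1) : ℤ) * r₁ - ((b + 1 + d).choose b : ℤ) * r₂

section Counting

open scoped Classical

noncomputable def weakPairs (m a : ℕ) : Finset (Finset ℕ × Finset ℕ) :=
  {AB ∈ pairs m a a | Dominates AB.1 AB.2}

noncomputable def strictPairs (k a : ℕ) : Finset (Finset ℕ × Finset ℕ) :=
  {AB ∈ pairs k a a | StrictlyDominates AB.1 AB.2}

theorem mem_weakPairs {m a : ℕ} {AB : Finset ℕ × Finset ℕ} :
    AB ∈ weakPairs m a ↔ AB ∈ pairs m a a ∧ Dominates AB.1 AB.2 := by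
  rw [weakPairs, mem_filter]

theorem mem_strictPairs {k a : ℕ} {AB : Finset ℕ × Finset ℕ} :
    AB ∈ strictPairs k a ↔ AB ∈ pairs k a a ∧ StrictlyDominates AB.1 AB.2 := by
  rw [strictPairs, mem_filter]

theorem card_not_dominates (m b : ℕ) :
    #{AB ∈ pairs m (b + 1) (b + 1) | ¬Dominates AB.1 AB.2} = m.choose b * m.choose (b + 2) := by
  have hpairs {AB : Finset ℕ × Finset ℕ} (hAB : AB ∈ pairs m b (b + 2)) :
      ¬Dominates AB.1 AB.2 := by
    obtain ⟨⟨hA, hAcard⟩, hB, hBcard⟩ := mem_pairs.1 hAB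
    exact not_dominates_of_card_lt hA hB (by omega)
  rw [← card_pairs]
  refine card_nbij' reflect reflect (fun AB hAB => ?_) (fun AB hAB => ?_)
    (fun AB hAB => reflect_reflect (mem_filter.1 hAB).2)
    (fun AB hAB => reflect_reflect (hpairs hAB))
  · obtain ⟨hAB, hdom⟩ := mem_filter.1 hAB
    exact reflect_mem_pairs hAB hdom
  · exact mem_filter.2 ⟨reflect_mem_pairs hAB (hpairs hAB), not_dominates_reflect (hpairs hAB)⟩

theorem succ_mul_card_weakPairs (m a : ℕ) :
    (a + 1) * #(weakPairs m a) = (m + 1).choose a * m.choose a := by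
  cases a with
  | zero =>
    have hall : ∀ AB ∈ pairs m 0 0, Dominates AB.1 AB.2 := fun AB hAB n => by
      simp [card_eq_zero.1 (mem_pairs.1 hAB).2.2, prefixCard]
    rw [weakPairs, filter_true_of_mem hall, card_pairs]
    simp
  | succ b =>
    have hsplit := card_filter_add_card_filter_not (s := pairs m (b + 1) (b + 1))
      (fun AB => Dominates AB.1 AB.2)
    rw [card_not_dominates, card_pairs] at hsplit
    have hid := add_two_mul_choose_succ_mul_choose_succ m b
    rw [weakPairs]
    zify at hsplit hid ⊢
    linear_combination (b + 2 : ℤ) * hsplit + hid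

theorem card_weakPairs (m a : ℕ) :
    #(weakPairs m a) = (m + 1).choose a * m.choose a / (a + 1) := by
  rw [← succ_mul_card_weakPairs, Nat.mul_div_cancel_left _ a.succ_pos]

theorem image_add_one_image_sub_one {X : Finset ℕ} (hX : 0 ∉ X) :
    (X.image (· - 1)).image (· + 1) = X := by
  rw [image_image]
  exact (image_congr fun i hi => Nat.sub_add_cancel
    (Nat.pos_of_ne_zero fun h => hX (h ▸ hi))).trans image_id

theorem image_add_one_subset_range_iff {X : Finset ℕ} {m : ℕ} :
    X.image (· + 1) ⊆ range (m + 1) ↔ X ⊆ range m := by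
  simp [subset_iff]

theorem mem_strictPairs_succ_iff {m a : ℕ} {A B : Finset ℕ} :
    (A, B.image (· + 1)) ∈ strictPairs (m + 1) a ↔ (A, B) ∈ weakPairs m a := by
  simp only [mem_strictPairs, mem_weakPairs, mem_pairs, image_add_one_subset_range_iff,
    card_image_of_injective _ (add_left_injective 1), strictlyDominates_image_add_one_iff]
  constructor
  · rintro ⟨⟨⟨-, hAcard⟩, hB, hBcard⟩, hdom⟩
    exact ⟨⟨⟨subset_range_of_dominates hB (hAcard.trans hBcard.symm) hdom, hAcard⟩, hB, hBcard⟩,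
      hdom⟩
  · rintro ⟨⟨⟨hA, hAcard⟩, hB⟩, hdom⟩
    exact ⟨⟨⟨hA.trans (range_subset_range.2 m.le_succ), hAcard⟩, hB⟩, hdom⟩

theorem card_strictPairs_succ (m a : ℕ) : #(strictPairs (m + 1) a) = #(weakPairs m a) := by
  have hshift {AB : Finset ℕ × Finset ℕ} (hAB : AB ∈ strictPairs (m + 1) a) :
      (AB.1, (AB.2.image (· - 1)).image (· + 1)) = AB :=
    Prod.ext rfl (image_add_one_image_sub_one
      (zero_notMem_of_strictlyDominates (mem_strictPairs.1 hAB).2))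
  refine card_nbij' (fun AB => (AB.1, AB.2.image (· - 1))) (fun AB => (AB.1, AB.2.image (· + 1)))
    (fun AB hAB => mem_strictPairs_succ_iff.1 ((hshift hAB).symm ▸ hAB))
    (fun AB hAB => mem_strictPairs_succ_iff.2 hAB) (fun AB hAB => hshift hAB) (fun AB _ => ?_)
  simp [image_image, Function.comp_def]

theorem card_strictPairs (k a : ℕ) :
    #(strictPairs k a) = k.choose a * (k - 1).choose a / (a + 1) := by
  cases k with
  | zero =>
    have hall : ∀ AB ∈ pairs 0 a a, StrictlyDominates AB.1 AB.2 := fun AB hAB n => by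
      simp [subset_empty.1 (mem_pairs.1 hAB).2.1, prefixCard]
    rw [strictPairs, filter_true_of_mem hall, card_pairs]
    cases a <;> simp
  | succ m => rw [card_strictPairs_succ, card_weakPairs, Nat.add_sub_cancel]

end Counting

section Excursion

variable {n : ℕ}

def IsExcursion (f : Fin n → ℤ) : Prop :=
  (∀ j : Fin n, 0 ≤ ∑ i ∈ univ.filter (fun i => i ≤ j), f i) ∧ ∑ i, f i = 0

theorem sum_filter_le_neg_one_pow (j : Fin n) :
    ∑ i ∈ univ.filter (fun i => i ≤ j), (-1 : ℤ) ^ (i : ℕ) = if Even (j : ℕ) then 1 else 0 := by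
  have hmap := sum_map (Iic j) Fin.valEmbedding (fun i => (-1 : ℤ) ^ i)
  rw [Fin.map_valEmbedding_Iic, ← Nat.range_succ_eq_Iic, ← Fin.sum_univ_eq_sum_range,
    Fin.sum_neg_one_pow] at hmap
  simp only [Fin.valEmbedding_apply] at hmap
  rw [filter_ge_eq_Iic, ← hmap]
  by_cases hj : Even (j : ℕ) <;> simp [hj, Nat.even_add_one]

theorem isExcursion_iff_of_eq_two_mul_add {k : ℕ} {f g : Fin (2 * k) → ℤ}
    (h : ∀ i, g i = 2 * f i + (-1) ^ (i : ℕ)) : IsExcursion g ↔ IsExcursion f := by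
  have hprefix (j : Fin (2 * k)) : ∑ i ∈ univ.filter (fun i => i ≤ j), g i =
      2 * ∑ i ∈ univ.filter (fun i => i ≤ j), f i + if Even (j : ℕ) then 1 else 0 := by
    simp_rw [h, sum_add_distrib, ← mul_sum, sum_filter_le_neg_one_pow]
  have htotal : ∑ i, g i = 2 * ∑ i, f i := by
    simp_rw [h, sum_add_distrib, ← mul_sum, Fin.sum_neg_one_pow]
    simp
  refine and_congr (forall_congr' fun j => ?_) (by omega)
  rw [hprefix]
  split_ifs <;> omega

end Excursion

section MotzkinStep

variable {n : ℕ}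

def motzkinStep (x : Fin n → Bool) (i : Fin n) : ℤ :=
  (if x i = true ∧ Odd (i : ℕ) then 1 else 0) - (if x i = false ∧ Even (i : ℕ) then 1 else 0)

theorem ite_eq_two_mul_motzkinStep_add (x : Fin n → Bool) (i : Fin n) :
    (if x i then 1 else -1 : ℤ) = 2 * motzkinStep x i + (-1) ^ (i : ℕ) := by
  rcases Nat.even_or_odd (i : ℕ) with hi | hi
  · cases hx : x i <;> simp [motzkinStep, hx, hi, hi.neg_one_pow, Nat.not_odd_iff_even.2 hi]
  · cases hx : x i <;> simp [motzkinStep, hx, hi, hi.neg_one_pow, Nat.not_even_iff_odd.2 hi]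

theorem motzkinStep_eq_one_iff (x : Fin n → Bool) (i : Fin n) :
    motzkinStep x i = 1 ↔ x i = true ∧ Odd (i : ℕ) := by
  unfold motzkinStep
  split_ifs <;> simp_all

theorem sum_motzkinStep (x : Fin n → Bool) (s : Finset (Fin n)) :
    ∑ i ∈ s, motzkinStep x i =
      (#{i ∈ s | x i = true ∧ Odd (i : ℕ)} : ℤ) - #{i ∈ s | x i = false ∧ Even (i : ℕ)} := by
  simp [motzkinStep, sum_sub_distrib, sum_boole]

theorem isBallot_iff {k : ℕ} (x : Fin (2 * k) → Bool) :
    IsBallot k x ↔ IsExcursion (motzkinStep x) :=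
  isExcursion_iff_of_eq_two_mul_add (ite_eq_two_mul_motzkinStep_add x)

end MotzkinStep

theorem card_filter_even_range (k : ℕ) : #{i ∈ range (2 * k) | Even i} = k := by
  induction k with
  | zero => simp
  | succ k ih =>
    rw [show 2 * (k + 1) = 2 * k + 1 + 1 by ring, range_add_one, range_add_one, filter_insert,
      filter_insert, if_neg (by simp [parity_simps]), if_pos (by simp),
      card_insert_of_notMem (by simp), ih]

theorem card_filter_even_fin (k : ℕ) : #{i : Fin (2 * k) | Even (i : ℕ)} = k := by
  have h := card_filter_even_range k
  rw [← Nat.Iio_eq_range, ← Fin.map_valEmbedding_univ, filter_map, card_map] at h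
  exact h

section Halving

variable {k c : ℕ} {S : Finset (Fin (2 * k))}

theorem injOn_div_two (hS : ∀ i ∈ S, (i : ℕ) % 2 = c) :
    Set.InjOn (fun i : Fin (2 * k) => (i : ℕ) / 2) S := fun i hi j hj hij => by
  have := hS i hi
  have := hS j hj
  simp only at hij
  exact Fin.ext (by omega)

theorem prefixCard_image_div_two (hS : ∀ i ∈ S, (i : ℕ) % 2 = c) (t : ℕ) :
    prefixCard (S.image fun i : Fin (2 * k) => (i : ℕ) / 2) t =
      #(S.filter fun i : Fin (2 * k) => (i : ℕ) < 2 * t) := by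
  rw [prefixCard, filter_image, card_image_of_injOn ((injOn_div_two hS).mono (filter_subset _ _))]
  congr 1
  exact filter_congr fun i _ => by show (i : ℕ) / 2 < t ↔ (i : ℕ) < 2 * t; omega

theorem image_div_two_subset_range (S : Finset (Fin (2 * k))) :
    (S.image fun i : Fin (2 * k) => (i : ℕ) / 2) ⊆ range k := fun α hα => by
  obtain ⟨i, -, rfl⟩ := mem_image.1 hα
  have := i.isLt
  exact mem_range.2 (by omega)

theorem div_two_mem_image_iff (hS : ∀ i ∈ S, (i : ℕ) % 2 = c) {i : Fin (2 * k)}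
    (hi : (i : ℕ) % 2 = c) :
    (i : ℕ) / 2 ∈ S.image (fun i : Fin (2 * k) => (i : ℕ) / 2) ↔ i ∈ S := by
  refine ⟨fun h => ?_, mem_image_of_mem _⟩
  obtain ⟨j, hj, hji⟩ := mem_image.1 h
  have := hS j hj
  rwa [show j = i from Fin.ext (by omega)] at hj

end Halving

section Indices

variable {k : ℕ}

/-- A rise at index `2 * α + 1` is recorded as `α`, a fall at index `2 * β` as `β`. -/
def riseIndices (x : Fin (2 * k) → Bool) : Finset ℕ :=
  (univ.filter fun i => x i = true ∧ Odd (i : ℕ)).image fun i : Fin (2 * k) => (i : ℕ) / 2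

def fallIndices (x : Fin (2 * k) → Bool) : Finset ℕ :=
  (univ.filter fun i => x i = false ∧ Even (i : ℕ)).image fun i : Fin (2 * k) => (i : ℕ) / 2

def ofIndices (A B : Finset ℕ) (i : Fin (2 * k)) : Bool :=
  if Odd (i : ℕ) then decide ((i : ℕ) / 2 ∈ A) else decide ((i : ℕ) / 2 ∉ B)

theorem mod_two_of_mem_rise {x : Fin (2 * k) → Bool} :
    ∀ i ∈ univ.filter fun i => x i = true ∧ Odd (i : ℕ), (i : ℕ) % 2 = 1 :=
  fun _ hi => Nat.odd_iff.1 (mem_filter.1 hi).2.2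

theorem mod_two_of_mem_fall {x : Fin (2 * k) → Bool} :
    ∀ i ∈ univ.filter fun i => x i = false ∧ Even (i : ℕ), (i : ℕ) % 2 = 0 :=
  fun _ hi => Nat.even_iff.1 (mem_filter.1 hi).2.2

theorem riseIndices_subset_range (x : Fin (2 * k) → Bool) : riseIndices x ⊆ range k :=
  image_div_two_subset_range _

theorem fallIndices_subset_range (x : Fin (2 * k) → Bool) : fallIndices x ⊆ range k :=
  image_div_two_subset_range _

theorem card_riseIndices (x : Fin (2 * k) → Bool) :
    #(riseIndices x) = #(univ.filter fun i => x i = true ∧ Odd (i : ℕ)) :=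
  card_image_of_injOn (injOn_div_two mod_two_of_mem_rise)

theorem card_fallIndices (x : Fin (2 * k) → Bool) :
    #(fallIndices x) = #(univ.filter fun i => x i = false ∧ Even (i : ℕ)) :=
  card_image_of_injOn (injOn_div_two mod_two_of_mem_fall)

theorem sum_filter_le_motzkinStep (x : Fin (2 * k) → Bool) (j : Fin (2 * k)) :
    ∑ i ∈ univ.filter (fun i => i ≤ j), motzkinStep x i =
      (prefixCard (riseIndices x) (((j : ℕ) + 1) / 2) : ℤ) -
        prefixCard (fallIndices x) ((j : ℕ) / 2 + 1) := by
  rw [sum_motzkinStep, riseIndices, fallIndices, prefixCard_image_div_two mod_two_of_mem_rise,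
    prefixCard_image_div_two mod_two_of_mem_fall, filter_filter, filter_filter, filter_filter,
    filter_filter]
  congr 3 <;> refine filter_congr fun i _ => ?_ <;>
    simp only [Fin.le_iff_val_le_val, Nat.odd_iff, Nat.even_iff] <;> grind

theorem sum_motzkinStep_univ (x : Fin (2 * k) → Bool) :
    ∑ i, motzkinStep x i = (#(riseIndices x) : ℤ) - #(fallIndices x) := by
  rw [sum_motzkinStep, card_riseIndices, card_fallIndices]

theorem strictlyDominates_iff {A B : Finset ℕ} (hA : A ⊆ range k) (hB : B ⊆ range k)
    (hcard : #A = #B) :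
    StrictlyDominates A B ↔
      ∀ j < 2 * k, prefixCard B (j / 2 + 1) ≤ prefixCard A ((j + 1) / 2) := by
  refine ⟨fun h j _ => (h (j / 2)).trans (prefixCard_mono A (by omega)), fun h n => ?_⟩
  rcases lt_or_ge n k with hn | hn
  · simpa [show (2 * n + 1) / 2 = n by omega] using h (2 * n) (by omega)
  · rw [prefixCard_of_subset_range hB (by omega), prefixCard_of_subset_range hA hn, hcard]

theorem isExcursion_motzkinStep_iff (x : Fin (2 * k) → Bool) :
    IsExcursion (motzkinStep x) ↔ #(riseIndices x) = #(fallIndices x) ∧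
      StrictlyDominates (riseIndices x) (fallIndices x) := by
  simp only [IsExcursion, sum_filter_le_motzkinStep, sum_motzkinStep_univ, sub_nonneg,
    sub_eq_zero, Nat.cast_le, Nat.cast_inj]
  refine ⟨fun ⟨hprefix, hcard⟩ => ⟨hcard, ?_⟩, fun ⟨hcard, hdom⟩ => ⟨fun j => ?_, hcard⟩⟩
  all_goals have hiff :=
    strictlyDominates_iff (riseIndices_subset_range x) (fallIndices_subset_range x) hcard
  · exact hiff.2 fun j hj => hprefix ⟨j, hj⟩
  · exact hiff.1 hdom j j.isLt

theorem div_two_mem_riseIndices_iff {x : Fin (2 * k) → Bool} {i : Fin (2 * k)}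
    (hi : Odd (i : ℕ)) : (i : ℕ) / 2 ∈ riseIndices x ↔ x i = true := by
  rw [riseIndices, div_two_mem_image_iff mod_two_of_mem_rise (Nat.odd_iff.1 hi)]
  simp [hi]

theorem div_two_mem_fallIndices_iff {x : Fin (2 * k) → Bool} {i : Fin (2 * k)}
    (hi : Even (i : ℕ)) : (i : ℕ) / 2 ∈ fallIndices x ↔ x i = false := by
  rw [fallIndices, div_two_mem_image_iff mod_two_of_mem_fall (Nat.even_iff.1 hi)]
  simp [hi]

theorem riseIndices_ofIndices {A : Finset ℕ} (hA : A ⊆ range k) (B : Finset ℕ) :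
    riseIndices (ofIndices (k := k) A B) = A := by
  ext α
  by_cases hα : α < k
  · have hi : Odd (2 * α + 1) := odd_two_mul_add_one α
    have hdiv : (2 * α + 1) / 2 = α := by omega
    rw [← hdiv, div_two_mem_riseIndices_iff (i := ⟨2 * α + 1, by omega⟩) hi, ofIndices, if_pos hi]
    simp
  · exact iff_of_false (fun h => hα (mem_range.1 (riseIndices_subset_range _ h)))
      (fun h => hα (mem_range.1 (hA h)))

theorem fallIndices_ofIndices (A : Finset ℕ) {B : Finset ℕ} (hB : B ⊆ range k) :
    fallIndices (ofIndices (k := k) A B) = B := by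
  ext β
  by_cases hβ : β < k
  · have hi : Even (2 * β) := even_two_mul β
    have hdiv : 2 * β / 2 = β := by omega
    rw [← hdiv, div_two_mem_fallIndices_iff (i := ⟨2 * β, by omega⟩) hi, ofIndices,
      if_neg (Nat.not_odd_iff_even.2 hi)]
    simp
  · exact iff_of_false (fun h => hβ (mem_range.1 (fallIndices_subset_range _ h)))
      (fun h => hβ (mem_range.1 (hB h)))

theorem ofIndices_riseIndices_fallIndices (x : Fin (2 * k) → Bool) :
    ofIndices (riseIndices x) (fallIndices x) = x := by
  funext i
  by_cases hi : Odd (i : ℕ)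
  · simp [ofIndices, hi, div_two_mem_riseIndices_iff hi]
  · simp [ofIndices, hi, div_two_mem_fallIndices_iff (Nat.not_odd_iff_even.1 hi)]

end Indices

section Ballots

variable {k : ℕ}

theorem card_true_even_add_card_false_even (x : Fin (2 * k) → Bool) :
    #(univ.filter fun i => x i = true ∧ Even (i : ℕ)) +
      #(univ.filter fun i => x i = false ∧ Even (i : ℕ)) = k := by
  have h := card_filter_add_card_filter_not (s := univ.filter fun i : Fin (2 * k) => Even (i : ℕ))
    (fun i => x i = true)
  simp only [filter_filter, Bool.not_eq_true, card_filter_even_fin] at h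
  simpa only [and_comm] using h

theorem isBallot_and_card_iff (x : Fin (2 * k) → Bool) (a : ℕ) :
    (IsBallot k x ∧ #(univ.filter fun i => x i = true ∧ Odd (i : ℕ)) = a ∧
        #(univ.filter fun i => x i = true ∧ Even (i : ℕ)) = k - a) ↔
      IsExcursion (motzkinStep x) ∧ #(univ.filter fun i => x i = true ∧ Odd (i : ℕ)) = a := by
  rw [isBallot_iff]
  refine ⟨fun ⟨hx, hodd, _⟩ => ⟨hx, hodd⟩, fun ⟨hx, hodd⟩ => ⟨hx, hodd, ?_⟩⟩
  have hbalance := hx.2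
  rw [sum_motzkinStep] at hbalance
  have := card_true_even_add_card_false_even x
  omega

theorem indices_mem_strictPairs_iff (x : Fin (2 * k) → Bool) (a : ℕ) :
    (riseIndices x, fallIndices x) ∈ strictPairs k a ↔
      IsBallot k x ∧ #(univ.filter fun i => x i = true ∧ Odd (i : ℕ)) = a ∧
        #(univ.filter fun i => x i = true ∧ Even (i : ℕ)) = k - a := by
  rw [isBallot_and_card_iff, isExcursion_motzkinStep_iff, mem_strictPairs, mem_pairs,
    ← card_riseIndices]
  constructor
  · rintro ⟨⟨⟨-, hA⟩, -, hB⟩, hdom⟩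
    exact ⟨⟨hA.trans hB.symm, hdom⟩, hA⟩
  · rintro ⟨⟨hcard, hdom⟩, hA⟩
    exact ⟨⟨⟨riseIndices_subset_range x, hA⟩, fallIndices_subset_range x, hcard ▸ hA⟩, hdom⟩

theorem card_ballots (k a : ℕ) :
    Nat.card {x : Fin (2 * k) → Bool // IsBallot k x ∧
        (univ.filter fun i => x i = true ∧ Odd i.1).card = a ∧
        (univ.filter fun i => x i = true ∧ Even i.1).card = k - a} = #(strictPairs k a) := by
  classical
  rw [Nat.card_eq_fintype_card, Fintype.card_subtype]
  refine card_nbij' (fun x => (riseIndices x, fallIndices x)) (fun AB => ofIndices AB.1 AB.2)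
    (fun x hx => (indices_mem_strictPairs_iff x a).2 (mem_filter.1 hx).2) (fun AB hAB => ?_)
    (fun x _ => ofIndices_riseIndices_fallIndices x) (fun AB hAB => ?_)
  all_goals obtain ⟨⟨hA, -⟩, hB, -⟩ := mem_pairs.1 (mem_strictPairs.1 hAB).1
  · refine mem_filter.2 ⟨mem_univ _, (indices_mem_strictPairs_iff _ a).1 ?_⟩
    rwa [riseIndices_ofIndices hA, fallIndices_ofIndices _ hB]
  · exact Prod.ext (riseIndices_ofIndices hA _) (fallIndices_ofIndices _ hB)

end Ballots

section Motzkin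

variable {n : ℕ}

def IsAlternating (p : Fin n → Fin 3) : Prop :=
  ∀ i, ((p i : ℤ) - 1 = 1 → Odd i.1) ∧ ((p i : ℤ) - 1 = -1 → Even i.1)

/-- The paper's `x_i = 2 p_i + (-1)^(i-1)`, with steps indexed from `0` and `p_i = p i - 1`:
the entry is `+1` exactly when `p i` exceeds the parity of `i`. -/
def toBallot (p : Fin n → Fin 3) (i : Fin n) : Bool := decide ((i : ℕ) % 2 < (p i : ℕ))

def ofBallot (x : Fin n → Bool) (i : Fin n) : Fin 3 :=
  ⟨(x i).toNat + (i : ℕ) % 2, by have := Bool.toNat_le (x i); omega⟩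

theorem motzkinStep_toBallot {p : Fin n → Fin 3} (hp : IsAlternating p) (i : Fin n) :
    motzkinStep (toBallot p) i = (p i : ℤ) - 1 := by
  have h := hp i
  have hlt := (p i).isLt
  simp only [motzkinStep, toBallot, Nat.odd_iff, Nat.even_iff, decide_eq_true_eq,
    decide_eq_false_iff_not] at h ⊢
  split_ifs <;> omega

theorem isAlternating_ofBallot (x : Fin n → Bool) : IsAlternating (ofBallot x) := fun i => by
  have := Bool.toNat_le (x i)
  simp only [ofBallot, Nat.odd_iff, Nat.even_iff]
  omega

theorem toBallot_ofBallot (x : Fin n → Bool) : toBallot (ofBallot x) = x := by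
  funext i
  cases hx : x i <;> simp [toBallot, ofBallot, hx]

theorem ofBallot_toBallot {p : Fin n → Fin 3} (hp : IsAlternating p) :
    ofBallot (toBallot p) = p := by
  funext i
  have h := hp i
  have hlt := (p i).isLt
  simp only [Nat.odd_iff, Nat.even_iff] at h
  ext
  simp only [ofBallot, toBallot]
  by_cases hc : (i : ℕ) % 2 < (p i : ℕ) <;> simp [hc] <;> omega

theorem isAltMotzkin_and_card_iff {k : ℕ} {p : Fin (2 * k) → Fin 3} (hp : IsAlternating p)
    (a : ℕ) :
    (IsAltMotzkin k p ∧ #(univ.filter fun i => (p i : ℤ) - 1 = 1) = a) ↔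
      IsExcursion (motzkinStep (toBallot p)) ∧
        #(univ.filter fun i => toBallot p i = true ∧ Odd (i : ℕ)) = a := by
  have hstep : motzkinStep (toBallot p) = fun i => (p i : ℤ) - 1 :=
    funext (motzkinStep_toBallot hp)
  have hrises : (univ.filter fun i => (p i : ℤ) - 1 = 1) =
      univ.filter fun i => toBallot p i = true ∧ Odd (i : ℕ) :=
    filter_congr fun i _ => by rw [← motzkinStep_toBallot hp, motzkinStep_eq_one_iff]
  rw [hstep, hrises]
  exact and_congr_left' (and_iff_right hp)

def altMotzkinEquivBallot (k a : ℕ) :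
    {p : Fin (2 * k) → Fin 3 // IsAltMotzkin k p ∧
        (univ.filter fun i => (p i : ℤ) - 1 = 1).card = a} ≃
      {x : Fin (2 * k) → Bool // IsBallot k x ∧
        (univ.filter fun i => x i = true ∧ Odd i.1).card = a ∧
        (univ.filter fun i => x i = true ∧ Even i.1).card = k - a} where
  toFun p := ⟨toBallot p.1,
    (isBallot_and_card_iff _ a).2 ((isAltMotzkin_and_card_iff p.2.1.1 a).1 p.2)⟩
  invFun x := ⟨ofBallot x.1, (isAltMotzkin_and_card_iff (isAlternating_ofBallot x.1) a).2 <| by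
    rw [toBallot_ofBallot]
    exact (isBallot_and_card_iff _ a).1 x.2⟩
  left_inv p := Subtype.ext (ofBallot_toBallot p.2.1.1)
  right_inv x := Subtype.ext (toBallot_ofBallot x.1)

end Motzkin

end Narayana

theorem stmt2_general (k a : ℕ) :
    Nonempty
      ({p : Fin (2 * k) → Fin 3 // IsAltMotzkin k p ∧
          (Finset.univ.filter (fun i => (p i : ℤ) - 1 = 1)).card = a} ≃
       {x : Fin (2 * k) → Bool // IsBallot k x ∧
          (Finset.univ.filter (fun i => x i = true ∧ Odd i.1)).card = a ∧
          (Finset.univ.filter (fun i => x i = true ∧ Even i.1)).card = k - a}) ∧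
    Nat.card {x : Fin (2 * k) → Bool // IsBallot k x ∧
          (Finset.univ.filter (fun i => x i = true ∧ Odd i.1)).card = a ∧
          (Finset.univ.filter (fun i => x i = true ∧ Even i.1)).card = k - a}
      = k.choose a * (k - 1).choose a / (a + 1) :=
  ⟨⟨Narayana.altMotzkinEquivBallot k a⟩,
    (Narayana.card_ballots k a).trans (Narayana.card_strictPairs k a)⟩

/-- There is a bijection between alternating Motzkin paths of length `2k`
with `a` rises and ballot sequences of length `2k` with exactly `a` ones at
even positions (position `i+1` even, i.e. `Odd i.1`) and `k - a` ones at odd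
positions; consequently the number of such ballot sequences is the Narayana
number `N(k,a)`. -/
theorem stmt2 (k a : ℕ) (ha : a ≤ k) :
    Nonempty
      ({p : Fin (2 * k) → Fin 3 // IsAltMotzkin k p ∧
          (Finset.univ.filter (fun i => (p i : ℤ) - 1 = 1)).card = a} ≃
       {x : Fin (2 * k) → Bool // IsBallot k x ∧
          (Finset.univ.filter (fun i => x i = true ∧ Odd i.1)).card = a ∧
          (Finset.univ.filter (fun i => x i = true ∧ Even i.1)).card = k - a}) ∧
    Nat.card {x : Fin (2 * k) → Bool // IsBallot k x ∧
          (Finset.univ.filter (fun i => x i = true ∧ Odd i.1)).card = a ∧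
          (Finset.univ.filter (fun i => x i = true ∧ Even i.1)).card = k - a}
      = k.choose a * (k - 1).choose a / (a + 1) :=
  stmt2_general k a
end

section
/- If p₁,…,p_{2k} encodes an alternating Motzkin path (p_i ∈ {1,0,−1}, rises only at even i, falls only at odd i, all partial sums nonnegative, total sum 0), then the sequence x_i = 2p_i + (−1)^{i−1} is a ballot sequence: each x_i ∈ {1,−1}, all partial sums x₁+⋯+x_j are nonnegative, and x₁+⋯+x_{2k} = 0. -/
lemma filt_sum (n : ℕ) (j : Fin n) (f : ℕ → ℤ) :
    ∑ i ∈ Finset.univ.filter (fun i : Fin n => i ≤ j), f i.1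
      = ∑ i ∈ Finset.range (j.1 + 1), f i := by
  apply Finset.sum_nbij' (fun i : Fin n => i.1)
    (fun i : ℕ => if h : i < n then (⟨i, h⟩ : Fin n) else j)
  · intro a ha
    rw [Finset.mem_filter] at ha
    exact Finset.mem_range.mpr (Nat.lt_succ_of_le ha.2)
  · intro a ha
    have ha' := Nat.lt_succ_iff.mp (Finset.mem_range.mp ha)
    have h : a < n := lt_of_le_of_lt ha' j.2
    rw [Finset.mem_filter]
    refine ⟨Finset.mem_univ _, ?_⟩
    rw [dif_pos h]
    exact ha'
  · intro a ha
    rw [dif_pos a.2]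
  · intro a ha
    have h : a < n := lt_of_le_of_lt (Nat.lt_succ_iff.mp (Finset.mem_range.mp ha)) j.2
    rw [dif_pos h]
  · intros; rfl

/-- If `p₁,…,p_{2k}` encodes an alternating Motzkin path (`p i ∈ {1,0,-1}`,
rises only at even steps, falls only at odd steps — steps 1-indexed, so index
`i : Fin (2*k)` is step `i+1` — with nonnegative partial sums and total sum 0),
then `x i = 2 * p i + (-1)^(i+1-1) = 2 * p i + (-1)^i.1` is a ballot sequence:
each `x i ∈ {1,-1}`, all partial sums are nonnegative, and the total sum is 0. -/
theorem stmt3 (k : ℕ) (p : Fin (2 * k) → ℤ)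
    (hval : ∀ i, p i = 1 ∨ p i = 0 ∨ p i = -1)
    (hrise : ∀ i, p i = 1 → Odd i.1)
    (hfall : ∀ i, p i = -1 → Even i.1)
    (hpartial : ∀ j : Fin (2 * k),
      0 ≤ ∑ i ∈ Finset.univ.filter (fun i => i ≤ j), p i)
    (hsum : (∑ i, p i) = 0)
    (x : Fin (2 * k) → ℤ) (hx : ∀ i, x i = 2 * p i + (-1) ^ i.1) :
    (∀ i, x i = 1 ∨ x i = -1) ∧
    (∀ j : Fin (2 * k), 0 ≤ ∑ i ∈ Finset.univ.filter (fun i => i ≤ j), x i) ∧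
    (∑ i, x i) = 0 := by
  have hsplit : ∀ s : Finset (Fin (2 * k)),
      ∑ i ∈ s, x i = 2 * ∑ i ∈ s, p i + ∑ i ∈ s, ((-1 : ℤ)) ^ i.1 := by
    intro s
    rw [Finset.mul_sum, ← Finset.sum_add_distrib]
    exact Finset.sum_congr rfl fun i _ => hx i
  refine ⟨?_, ?_, ?_⟩
  · intro i
    rcases hval i with h | h | h
    · left
      rw [hx i, h, (hrise i h).neg_one_pow]; ring
    · rcases Nat.even_or_odd i.1 with he | ho
      · left; rw [hx i, h, he.neg_one_pow]; ring
      · right; rw [hx i, h, ho.neg_one_pow]; ring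
    · right
      rw [hx i, h, (hfall i h).neg_one_pow]; ring
  · intro j
    rw [hsplit]
    have h1 : 0 ≤ 2 * ∑ i ∈ Finset.univ.filter (fun i => i ≤ j), p i := by
      have := hpartial j; linarith
    have h2 : 0 ≤ ∑ i ∈ Finset.univ.filter (fun i => i ≤ j), ((-1 : ℤ)) ^ i.1 := by
      rw [filt_sum (2 * k) j (fun m => (-1 : ℤ) ^ m), neg_one_geom_sum]
      split <;> norm_num
    linarith
  · rw [hsplit Finset.univ, hsum]
    have : ∑ i : Fin (2 * k), ((-1 : ℤ)) ^ i.1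
        = ∑ i ∈ Finset.range (2 * k), ((-1 : ℤ)) ^ i := by
      rw [Fin.sum_univ_eq_sum_range]
    rw [this, neg_one_geom_sum, if_pos (even_two_mul k)]
    ring
end

section
/- Define recursively φ_L(0) = φ_R(0) = −1/z, φ_L(ζ) = −(z + α^{−1}φ_R(ζ−1))^{−1}, φ_R(ζ) = −(z + φ_L(ζ−1))^{−1}. Then for all ζ ≥ 0 (when the denominators are nonzero): φ_L(2ζ) = −(q_ζ(z) + α^{−1}q_{ζ−1}(z))/(z·q_ζ(z)), φ_L(2ζ+1) = −z·q_ζ(z)/(q_{ζ+1}(z) + q_ζ(z)), φ_R(2ζ) = −(q_ζ(z) + q_{ζ−1}(z))/(z·q_ζ(z)), and φ_R(2ζ+1) = −z·q_ζ(z)/(q_{ζ+1}(z) + α^{−1}q_ζ(z)). -/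
/-- `Qc α z n = q_{n-1}(z)`: the shifted Chebyshev polynomials with
`q_{−1} = 0`, `q_0 = 1`, `q_n = (z² − α⁻¹ − 1)q_{n−1} − α⁻¹q_{n−2}`. -/
noncomputable def Qc (α z : ℂ) : ℕ → ℂ
  | 0 => 0
  | 1 => 1
  | n + 2 => (z ^ 2 - α⁻¹ - 1) * Qc α z (n + 1) - α⁻¹ * Qc α z n

/-- The pair `(φ_L(n), φ_R(n))` defined by `φ_L(0) = φ_R(0) = −1/z`,
`φ_L(n) = −(z + α⁻¹ φ_R(n−1))⁻¹`, `φ_R(n) = −(z + φ_L(n−1))⁻¹`. -/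
noncomputable def phiPair (α z : ℂ) : ℕ → ℂ × ℂ
  | 0 => (-1 / z, -1 / z)
  | n + 1 => (-(z + α⁻¹ * (phiPair α z n).2)⁻¹, -(z + (phiPair α z n).1)⁻¹)

lemma inv_step (E N D : ℂ) (h : E = D / N) : -E⁻¹ = -N / D := by
  subst h
  rw [inv_div, neg_div]

/-- Explicit formulas for `φ_L` and `φ_R` in terms of the shifted Chebyshev
polynomials `q_n` (here `Qc α z (n+1) = q_n(z)`), valid when the denominators
are nonzero:
`φ_L(2ζ) = −(q_ζ + α⁻¹q_{ζ−1})/(z q_ζ)`, `φ_L(2ζ+1) = −z q_ζ/(q_{ζ+1} + q_ζ)`,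
`φ_R(2ζ) = −(q_ζ + q_{ζ−1})/(z q_ζ)`, `φ_R(2ζ+1) = −z q_ζ/(q_{ζ+1} + α⁻¹q_ζ)`. -/
theorem stmt11 (α z : ℂ) (hz : z ≠ 0)
    (hq : ∀ n : ℕ, Qc α z (n + 1) ≠ 0)
    (h1 : ∀ n : ℕ, Qc α z (n + 2) + Qc α z (n + 1) ≠ 0)
    (h2 : ∀ n : ℕ, Qc α z (n + 2) + α⁻¹ * Qc α z (n + 1) ≠ 0) :
    ∀ ζ : ℕ,
      (phiPair α z (2 * ζ)).1
          = -(Qc α z (ζ + 1) + α⁻¹ * Qc α z ζ) / (z * Qc α z (ζ + 1)) ∧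
      (phiPair α z (2 * ζ + 1)).1
          = -(z * Qc α z (ζ + 1)) / (Qc α z (ζ + 2) + Qc α z (ζ + 1)) ∧
      (phiPair α z (2 * ζ)).2
          = -(Qc α z (ζ + 1) + Qc α z ζ) / (z * Qc α z (ζ + 1)) ∧
      (phiPair α z (2 * ζ + 1)).2
          = -(z * Qc α z (ζ + 1)) / (Qc α z (ζ + 2) + α⁻¹ * Qc α z (ζ + 1)) := by
  intro ζ
  induction ζ with
  | zero =>
      have hQ2 : Qc α z 2 = z ^ 2 - α⁻¹ - 1 := by simp [Qc]
      have hQ1 : Qc α z 1 = 1 := by simp [Qc]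
      have hQ0 : Qc α z 0 = 0 := by simp [Qc]
      refine ⟨?_, ?_, ?_, ?_⟩
      · show (-1 / z : ℂ) = _
        rw [hQ1, hQ0]; ring
      · show -(z + α⁻¹ * (-1 / z))⁻¹ = _
        refine inv_step _ _ _ ?_
        rw [hQ1, hQ2, eq_div_iff (mul_ne_zero hz one_ne_zero), mul_one, add_mul,
          mul_assoc, div_mul_cancel₀ _ hz]
        ring
      · show (-1 / z : ℂ) = _
        rw [hQ1, hQ0]; ring
      · show -(z + -1 / z)⁻¹ = _
        refine inv_step _ _ _ ?_
        rw [hQ1, hQ2, eq_div_iff (mul_ne_zero hz one_ne_zero), mul_one, add_mul,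
          div_mul_cancel₀ _ hz]
        ring
  | succ ζ ih =>
      obtain ⟨ihL0, ihL1, ihR0, ihR1⟩ := ih
      have e2 : 2 * (ζ + 1) = (2 * ζ + 1) + 1 := by ring
      have e3 : 2 * (ζ + 1) + 1 = ((2 * ζ + 1) + 1) + 1 := by ring
      have hrec : Qc α z (ζ + 3) = (z ^ 2 - α⁻¹ - 1) * Qc α z (ζ + 2) - α⁻¹ * Qc α z (ζ + 1) := by
        show Qc α z ((ζ + 1) + 2) = _
        rw [Qc]
      have hL2 : (phiPair α z (2 * (ζ + 1))).1
          = -(Qc α z (ζ + 2) + α⁻¹ * Qc α z (ζ + 1)) / (z * Qc α z (ζ + 2)) := by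
        rw [e2]
        show -(z + α⁻¹ * (phiPair α z (2 * ζ + 1)).2)⁻¹ = _
        rw [ihR1]
        refine inv_step _ _ _ ?_
        rw [eq_div_iff (h2 ζ), add_mul, mul_assoc, div_mul_cancel₀ _ (h2 ζ)]
        ring
      have hR2 : (phiPair α z (2 * (ζ + 1))).2
          = -(Qc α z (ζ + 2) + Qc α z (ζ + 1)) / (z * Qc α z (ζ + 2)) := by
        rw [e2]
        show -(z + (phiPair α z (2 * ζ + 1)).1)⁻¹ = _
        rw [ihL1]
        refine inv_step _ _ _ ?_
        rw [eq_div_iff (h1 ζ), add_mul, div_mul_cancel₀ _ (h1 ζ)]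
        ring
      refine ⟨hL2, ?_, hR2, ?_⟩
      · rw [e3]
        show -(z + α⁻¹ * (phiPair α z ((2 * ζ + 1) + 1)).2)⁻¹ = _
        rw [← e2, hR2]
        refine inv_step _ _ _ ?_
        rw [eq_div_iff (mul_ne_zero hz (hq (ζ + 1))), add_mul, mul_assoc,
          div_mul_cancel₀ _ (mul_ne_zero hz (hq (ζ + 1))), hrec]
        ring
      · rw [e3]
        show -(z + (phiPair α z ((2 * ζ + 1) + 1)).1)⁻¹ = _
        rw [← e2, hL2]
        refine inv_step _ _ _ ?_
        rw [eq_div_iff (mul_ne_zero hz (hq (ζ + 1))), add_mul,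
          div_mul_cancel₀ _ (mul_ne_zero hz (hq (ζ + 1))), hrec]
        ring
end

section
/- With φ_L, φ_R as above and defining ψ_L(0) = ψ_R(0) = −1/z, ψ_L(ζ) = −(d_R−1)^{−1/2}·φ_L(ζ)·ψ_R(ζ−1), ψ_R(ζ) = −(d_R−1)^{−1/2}·φ_R(ζ)·ψ_L(ζ−1), one has ψ_L(2ζ) = ψ_R(2ζ) = −(d_R−1)^{−ζ}/(z·q_ζ(z)) for all ζ ≥ 0. -/
/-- `(ψ_L(n), ψ_R(n))` with `c = (d_R−1)^{−1/2}`: `ψ_L(0) = ψ_R(0) = −1/z`,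
`ψ_L(n) = −c·φ_L(n)·ψ_R(n−1)`, `ψ_R(n) = −c·φ_R(n)·ψ_L(n−1)`. -/
noncomputable def psiPair (α z c : ℂ) : ℕ → ℂ × ℂ
  | 0 => (-1 / z, -1 / z)
  | n + 1 => (-c * (phiPair α z (n + 1)).1 * (psiPair α z c n).2,
              -c * (phiPair α z (n + 1)).2 * (psiPair α z c n).1)

lemma neg_inv_eq_neg_div {K : Type*} [DivisionRing K] {x a b : K} (h : x = a / b) :
    -x⁻¹ = -b / a := by
  rw [h, inv_div, neg_div]

lemma Qc_add_two (α z : ℂ) (n : ℕ) :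
    Qc α z (n + 2) = (z ^ 2 - α⁻¹ - 1) * Qc α z (n + 1) - α⁻¹ * Qc α z n := rfl

section

variable {α z : ℂ}

lemma phiPair_two_mul_add_one {n : ℕ} (hz : z ≠ 0) (hQ : Qc α z (n + 1) ≠ 0)
    (h : phiPair α z (2 * n) = (-(Qc α z (n + 1) + α⁻¹ * Qc α z n) / (z * Qc α z (n + 1)),
      -(Qc α z (n + 1) + Qc α z n) / (z * Qc α z (n + 1)))) :
    phiPair α z (2 * n + 1) =
      (-(z * Qc α z (n + 1)) / (Qc α z (n + 2) + Qc α z (n + 1)),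
        -(z * Qc α z (n + 1)) / (Qc α z (n + 2) + α⁻¹ * Qc α z (n + 1))) := by
  rw [phiPair, h, Qc_add_two]
  ext <;> refine neg_inv_eq_neg_div ?_ <;> field_simp <;> ring

lemma phiPair_two_mul_add_two {n : ℕ} (hz : z ≠ 0)
    (hL : Qc α z (n + 2) + α⁻¹ * Qc α z (n + 1) ≠ 0) (hR : Qc α z (n + 2) + Qc α z (n + 1) ≠ 0)
    (h : phiPair α z (2 * n + 1) =
      (-(z * Qc α z (n + 1)) / (Qc α z (n + 2) + Qc α z (n + 1)),
        -(z * Qc α z (n + 1)) / (Qc α z (n + 2) + α⁻¹ * Qc α z (n + 1)))) :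
    phiPair α z (2 * (n + 1)) =
      (-(Qc α z (n + 2) + α⁻¹ * Qc α z (n + 1)) / (z * Qc α z (n + 2)),
        -(Qc α z (n + 2) + Qc α z (n + 1)) / (z * Qc α z (n + 2))) := by
  rw [show 2 * (n + 1) = 2 * n + 1 + 1 by ring, phiPair, h]
  generalize α⁻¹ = β at hL ⊢
  ext <;> refine neg_inv_eq_neg_div ?_ <;> field_simp <;> ring

lemma phiPair_two_mul (hz : z ≠ 0) (hq : ∀ n : ℕ, Qc α z (n + 1) ≠ 0)
    (h1 : ∀ n : ℕ, Qc α z (n + 2) + Qc α z (n + 1) ≠ 0)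
    (h2 : ∀ n : ℕ, Qc α z (n + 2) + α⁻¹ * Qc α z (n + 1) ≠ 0) (n : ℕ) :
    phiPair α z (2 * n) = (-(Qc α z (n + 1) + α⁻¹ * Qc α z n) / (z * Qc α z (n + 1)),
      -(Qc α z (n + 1) + Qc α z n) / (z * Qc α z (n + 1))) := by
  induction n with
  | zero => simp [phiPair, Qc]
  | succ n ih =>
    exact phiPair_two_mul_add_two hz (h2 n) (h1 n) (phiPair_two_mul_add_one hz (hq n) ih)

lemma phiPair_two_mul_add_two_cross_mul (hz : z ≠ 0)
    (hq : ∀ n : ℕ, Qc α z (n + 1) ≠ 0)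
    (h1 : ∀ n : ℕ, Qc α z (n + 2) + Qc α z (n + 1) ≠ 0)
    (h2 : ∀ n : ℕ, Qc α z (n + 2) + α⁻¹ * Qc α z (n + 1) ≠ 0) (n : ℕ) :
    (phiPair α z (2 * (n + 1))).1 * (phiPair α z (2 * n + 1)).2 = Qc α z (n + 1) / Qc α z (n + 2) ∧
    (phiPair α z (2 * (n + 1))).2 * (phiPair α z (2 * n + 1)).1 = Qc α z (n + 1) / Qc α z (n + 2) := by
  have hodd := phiPair_two_mul_add_one hz (hq n) (phiPair_two_mul hz hq h1 h2 n)
  rw [phiPair_two_mul_add_two hz (h2 n) (h1 n) hodd, hodd]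
  have hq₂ := hq (n + 1)
  have hR := h1 n
  have hL := h2 n
  generalize α⁻¹ = β at *
  constructor <;> field_simp

lemma psiPair_two_mul_add_two (α z c : ℂ) (n : ℕ) :
    psiPair α z c (2 * (n + 1)) =
      (c ^ 2 * ((phiPair α z (2 * (n + 1))).1 * (phiPair α z (2 * n + 1)).2) *
          (psiPair α z c (2 * n)).1,
        c ^ 2 * ((phiPair α z (2 * (n + 1))).2 * (phiPair α z (2 * n + 1)).1) *
          (psiPair α z c (2 * n)).2) := by
  rw [show 2 * (n + 1) = 2 * n + 1 + 1 by ring]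
  simp only [psiPair]
  ext <;> ring

lemma psiPair_two_mul (hz : z ≠ 0) (hq : ∀ n : ℕ, Qc α z (n + 1) ≠ 0)
    (h1 : ∀ n : ℕ, Qc α z (n + 2) + Qc α z (n + 1) ≠ 0)
    (h2 : ∀ n : ℕ, Qc α z (n + 2) + α⁻¹ * Qc α z (n + 1) ≠ 0) {B c : ℂ} (hc : c ^ 2 = B⁻¹)
    (n : ℕ) :
    psiPair α z c (2 * n) =
      (-(B ^ n)⁻¹ / (z * Qc α z (n + 1)), -(B ^ n)⁻¹ / (z * Qc α z (n + 1))) := by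
  induction n with
  | zero => simp [psiPair, Qc]
  | succ n ih =>
    obtain ⟨hL, hR⟩ := phiPair_two_mul_add_two_cross_mul hz hq h1 h2 n
    rw [psiPair_two_mul_add_two, ih, hc, hL, hR, pow_succ, mul_inv]
    have hq₁ := hq n
    ext <;> field_simp

end

theorem stmt12_general (dR : ℕ) (hdR : 2 ≤ dR) (z : ℂ) (hz : z ≠ 0)
    (α : ℂ)
    (hq : ∀ n : ℕ, Qc α z (n + 1) ≠ 0)
    (h1 : ∀ n : ℕ, Qc α z (n + 2) + Qc α z (n + 1) ≠ 0)
    (h2 : ∀ n : ℕ, Qc α z (n + 2) + α⁻¹ * Qc α z (n + 1) ≠ 0) :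
    ∀ ζ : ℕ,
      (psiPair α z ((Real.sqrt ((dR : ℝ) - 1) : ℂ))⁻¹ (2 * ζ)).1
          = -((((dR : ℂ) - 1) ^ ζ)⁻¹) / (z * Qc α z (ζ + 1)) ∧
      (psiPair α z ((Real.sqrt ((dR : ℝ) - 1) : ℂ))⁻¹ (2 * ζ)).2
          = -((((dR : ℂ) - 1) ^ ζ)⁻¹) / (z * Qc α z (ζ + 1)) := by
  have hdR' : (0 : ℝ) ≤ (dR : ℝ) - 1 := by
    rw [sub_nonneg, Nat.one_le_cast]
    omega
  have hc : ((Real.sqrt ((dR : ℝ) - 1) : ℂ))⁻¹ ^ 2 = ((dR : ℂ) - 1)⁻¹ := by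
    rw [inv_pow, ← Complex.ofReal_pow, Real.sq_sqrt hdR']
    push_cast
    rfl
  exact fun ζ => Prod.ext_iff.mp (psiPair_two_mul hz hq h1 h2 hc ζ)

/-- With `α = (d_R−1)/(d_L−1)`, one has
`ψ_L(2ζ) = ψ_R(2ζ) = −(d_R−1)^{−ζ}/(z·q_ζ(z))` for all `ζ ≥ 0`
(when the relevant denominators are nonzero). -/
theorem stmt12 (dL dR : ℕ) (hdL : 2 ≤ dL) (hdR : 2 ≤ dR) (z : ℂ) (hz : z ≠ 0)
    (α : ℂ) (hα : α = ((dR : ℂ) - 1) / ((dL : ℂ) - 1))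
    (hq : ∀ n : ℕ, Qc α z (n + 1) ≠ 0)
    (h1 : ∀ n : ℕ, Qc α z (n + 2) + Qc α z (n + 1) ≠ 0)
    (h2 : ∀ n : ℕ, Qc α z (n + 2) + α⁻¹ * Qc α z (n + 1) ≠ 0) :
    ∀ ζ : ℕ,
      (psiPair α z ((Real.sqrt ((dR : ℝ) - 1) : ℂ))⁻¹ (2 * ζ)).1
          = -((((dR : ℂ) - 1) ^ ζ)⁻¹) / (z * Qc α z (ζ + 1)) ∧
      (psiPair α z ((Real.sqrt ((dR : ℝ) - 1) : ℂ))⁻¹ (2 * ζ)).2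
          = -((((dR : ℂ) - 1) ^ ζ)⁻¹) / (z * Qc α z (ζ + 1)) :=
  stmt12_general dR hdR z hz α hq h1 h2
end

section
/- Let w ∈ ℂ with r = |w| > 1, let α > 0, z ∈ ℂ with z ≠ 0, and suppose q_ζ(z) = α^{−ζ/2}(w^{ζ+1} − w^{−ζ−1})/(w − w^{−1}) for all ζ. Define φ_L(2ζ) = −(q_ζ(z) + α^{−1}q_{ζ−1}(z))/(z·q_ζ(z)) and s_L(z) = −1/z − α^{−1/2}w^{−1}/z. Then |φ_L(2ζ) − s_L(z)| ≤ 2α^{−1/2}·r^{−2ζ−1}/(|z|·(1 − r^{−2ζ−2})). -/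
/-!
Write `N = w ^ (ζ + 1)`. Then `q_ζ` and `q_{ζ-1}` are `c (N - N⁻¹) / (w - w⁻¹)` and
`c √α (N w⁻¹ - (N w⁻¹)⁻¹) / (w - w⁻¹)` with `c = α^{-ζ/2}`, and the difference collapses to
`(w - w⁻¹) / (√α z (N² - 1))`. Bounding `|w - w⁻¹| ≤ 2 r` and `|N² - 1| ≥ r^{2ζ+2} - 1` gives
the estimate.
-/

theorem ratio_sub_limit_eq {K : Type*} [Field K] {c s w N z : K} (hc : c ≠ 0) (hs : s ≠ 0)
    (hz : z ≠ 0) (hw : w ≠ 0) (hN : N ≠ 0) (hw2 : w ^ 2 ≠ 1) (hN2 : N ^ 2 ≠ 1) :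
    -(c * (N - N⁻¹) / (w - w⁻¹) + (s * s)⁻¹ * (c * s * (N * w⁻¹ - (N * w⁻¹)⁻¹) / (w - w⁻¹)))
        / (z * (c * (N - N⁻¹) / (w - w⁻¹))) - (-1 / z - s⁻¹ * w⁻¹ / z)
      = (w - w⁻¹) / (s * z * (N ^ 2 - 1)) := by
  have hw2' : w ^ 2 - 1 ≠ 0 := sub_ne_zero.mpr hw2
  have hN2' : N ^ 2 - 1 ≠ 0 := sub_ne_zero.mpr hN2
  field_simp
  ring

theorem pow_ne_one_of_one_lt_norm {K : Type*} [NormedDivisionRing K] {x : K} (hx : 1 < ‖x‖)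
    {n : ℕ} (hn : n ≠ 0) : x ^ n ≠ 1 := by
  intro h
  have h_norm := congrArg norm h
  rw [norm_pow, norm_one] at h_norm
  exact (one_lt_pow₀ hx hn).ne' h_norm

theorem norm_sub_inv_div_le {K : Type*} [NormedField K] {s z w N : K} (hs : s ≠ 0) (hz : z ≠ 0)
    (hw : 1 ≤ ‖w‖) (hN : 1 < ‖N‖) :
    ‖(w - w⁻¹) / (s * z * (N ^ 2 - 1))‖ ≤ 2 * ‖w‖ / (‖s‖ * ‖z‖ * (‖N‖ ^ 2 - 1)) := by
  have hnum : ‖w - w⁻¹‖ ≤ 2 * ‖w‖ := calc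
    ‖w - w⁻¹‖ ≤ ‖w‖ + ‖w⁻¹‖ := norm_sub_le _ _
    _ ≤ ‖w‖ + ‖w‖ := by rw [norm_inv]; gcongr; exact (inv_le_one_of_one_le₀ hw).trans hw
    _ = 2 * ‖w‖ := by ring
  have hden : ‖N‖ ^ 2 - 1 ≤ ‖N ^ 2 - 1‖ := by
    have h := norm_sub_norm_le (N ^ 2) 1
    rwa [norm_pow, norm_one] at h
  have hN2 : 0 < ‖N‖ ^ 2 - 1 := by nlinarith
  rw [norm_div, norm_mul, norm_mul]
  gcongr

theorem two_mul_div_zpow_sq_sub_one_eq {a b r : ℝ} (ha : a ≠ 0) (hb : b ≠ 0) (hr : 1 < r)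
    (n : ℕ) :
    2 * r / (a * b * ((r ^ ((n : ℤ) + 1)) ^ 2 - 1))
      = 2 * a⁻¹ * r ^ (-(2 * (n : ℤ) + 1)) / (b * (1 - r ^ (-(2 * (n : ℤ) + 2)))) := by
  have hr0 : r ≠ 0 := by positivity
  have hpow : 1 < r ^ (2 * n + 2) := one_lt_pow₀ hr (by omega)
  rw [zpow_neg, zpow_neg]
  norm_cast
  rw [← pow_mul]
  have hden : 1 - (r ^ (2 * n + 2))⁻¹ ≠ 0 :=
    sub_ne_zero.mpr (inv_lt_one_of_one_lt₀ hpow).ne'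
  field_simp
  ring

theorem Complex.cpow_neg_sub_one_div_two {α : ℝ} (hα : 0 < α) (x : ℂ) :
    (α : ℂ) ^ (-(x - 1) / 2) = (α : ℂ) ^ (-x / 2) * (Real.sqrt α : ℂ) := by
  have hα₀ : (α : ℂ) ≠ 0 := by exact_mod_cast hα.ne'
  rw [show -(x - 1) / 2 = -x / 2 + (1 / 2 : ℝ) by push_cast; ring, Complex.cpow_add _ _ hα₀,
    ← Complex.ofReal_cpow hα.le, Real.sqrt_eq_rpow]

/-- Quantitative convergence of `φ_L(2ζ)` to `s_L(z)`: if `r = |w| > 1`,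
`α > 0`, `z ≠ 0`, and `q ζ = α^{−ζ/2}(w^{ζ+1} − w^{−ζ−1})/(w − w⁻¹)` for all
`ζ ∈ ℤ`, then with `φ_L(2ζ) = −(q_ζ + α⁻¹q_{ζ−1})/(z·q_ζ)` and
`s_L(z) = −1/z − α^{−1/2}w⁻¹/z`, one has
`|φ_L(2ζ) − s_L(z)| ≤ 2α^{−1/2}·r^{−2ζ−1}/(|z|·(1 − r^{−2ζ−2}))`. -/
theorem stmt13 (α : ℝ) (hα : 0 < α) (w z : ℂ)
    (hr : 1 < ‖w‖) (hz : z ≠ 0)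
    (q : ℤ → ℂ)
    (hq : ∀ ζ : ℤ, q ζ
      = (α : ℂ) ^ (-(ζ : ℂ) / 2) * (w ^ (ζ + 1) - w ^ (-ζ - 1)) / (w - w⁻¹))
    (ζ : ℕ) :
    ‖(-(q (ζ : ℤ) + (α : ℂ)⁻¹ * q ((ζ : ℤ) - 1)) / (z * q (ζ : ℤ))
          - (-1 / z - ((Real.sqrt α : ℝ) : ℂ)⁻¹ * w⁻¹ / z))‖
      ≤ 2 * (Real.sqrt α)⁻¹ * ‖w‖ ^ (-(2 * (ζ : ℤ) + 1)) /
          (‖z‖ * (1 - ‖w‖ ^ (-(2 * (ζ : ℤ) + 2)))) := by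
  have hw : w ≠ 0 := norm_pos_iff.mp (one_pos.trans hr)
  have hsqrt : 0 < Real.sqrt α := Real.sqrt_pos.mpr hα
  set c := (α : ℂ) ^ (-((ζ : ℤ) : ℂ) / 2)
  set N := w ^ ((ζ : ℤ) + 1) with hN_def
  set s : ℂ := (Real.sqrt α : ℂ)
  have hN : 1 < ‖N‖ := by rw [norm_zpow]; exact one_lt_zpow₀ hr (by omega)
  have hq₀ : q ζ = c * (N - N⁻¹) / (w - w⁻¹) := by rw [hq, ← zpow_neg, neg_add']
  have hq₁ : q (ζ - 1) = c * s * (N * w⁻¹ - (N * w⁻¹)⁻¹) / (w - w⁻¹) := by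
    have hNw : N * w⁻¹ = w ^ (ζ : ℤ) := by
      rw [hN_def, zpow_add_one₀ hw, mul_inv_cancel_right₀ hw]
    rw [hq, hNw, ← zpow_neg, show -((ζ : ℤ) - 1) - 1 = -ζ by ring, sub_add_cancel, Int.cast_sub,
      Int.cast_one, Complex.cpow_neg_sub_one_div_two hα]
  have hs : s ≠ 0 := Complex.ofReal_ne_zero.mpr hsqrt.ne'
  have hα_inv : (α : ℂ)⁻¹ = (s * s)⁻¹ := by
    rw [← Complex.ofReal_mul, Real.mul_self_sqrt hα.le]
  rw [hq₀, hq₁, hα_inv, ratio_sub_limit_eq (by simp [c, hα.ne']) hs hz hw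
    (norm_pos_iff.mp (one_pos.trans hN)) (pow_ne_one_of_one_lt_norm hr two_ne_zero)
    (pow_ne_one_of_one_lt_norm hN two_ne_zero)]
  calc _ ≤ 2 * ‖w‖ / (‖s‖ * ‖z‖ * (‖N‖ ^ 2 - 1)) := norm_sub_inv_div_le hs hz hr.le hN
    _ = _ := by
      rw [Complex.norm_real, Real.norm_of_nonneg hsqrt.le, hN_def, norm_zpow]
      exact two_mul_div_zpow_sq_sub_one_eq hsqrt.ne' (norm_ne_zero_iff.mpr hz) hr ζ
end

section
/- For s > 1 set η = s^{1/2} − s^{−1/2}. If z ∈ ℂ has Im(z) ≥ η, then |F(z²/2 − 1)| ≥ s, where F(u) = u + √(u²−1) with the branch of the square root chosen so that |F(u)| ≥ 1. -/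
/-! Write `w = u + c` with `u = z²/2 − 1`. Since `c² = u² − 1`, `w⁻¹ = u − c`, so
`z² = w + w⁻¹ + 2 = (v + v⁻¹)²` for a square root `v` of `w`, and after changing the sign of `v`
we get `z = v + v⁻¹`. The Joukowski map sends the circle `‖v‖ = ρ ≥ 1` onto an ellipse of
semi-minor axis `ρ − ρ⁻¹`, so `√s − (√s)⁻¹ ≤ Im z ≤ ρ − ρ⁻¹`, whence `√s ≤ ρ` and
`s ≤ ρ² = ‖w‖`. -/

namespace Complex

theorem inv_add_eq_sub_of_sq_eq {u c : ℂ} (hc : c ^ 2 = u ^ 2 - 1) : (u + c)⁻¹ = u - c :=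
  inv_eq_of_mul_eq_one_right (by linear_combination -hc)

theorem exists_sq_eq_and_eq_add_inv {z w : ℂ} (hw : w ≠ 0) (hz : z ^ 2 = w + w⁻¹ + 2) :
    ∃ v : ℂ, v ^ 2 = w ∧ z = v + v⁻¹ := by
  obtain ⟨v, hv⟩ := IsAlgClosed.exists_pow_nat_eq w two_pos
  have hv0 : v ≠ 0 := by rintro rfl; simp [eq_comm, hw] at hv
  have hsq : z ^ 2 = (v + v⁻¹) ^ 2 := by
    rw [hz, ← hv]; field_simp; ring
  rcases sq_eq_sq_iff_eq_or_eq_neg.mp hsq with h | h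
  · exact ⟨v, hv, h⟩
  · exact ⟨-v, by rw [neg_sq, hv], by rw [h, inv_neg]; ring⟩

theorem im_add_inv (v : ℂ) : (v + v⁻¹).im = v.im * (1 - (‖v‖ ^ 2)⁻¹) := by
  rw [add_im, inv_im, Complex.sq_norm]; ring

theorem abs_im_add_inv_le (v : ℂ) : |(v + v⁻¹).im| ≤ |‖v‖ - ‖v‖⁻¹| := by
  rcases eq_or_ne v 0 with rfl | hv
  · simp
  have hρ : 0 < ‖v‖ := norm_pos_iff.mpr hv
  calc |(v + v⁻¹).im| = |v.im| * |1 - (‖v‖ ^ 2)⁻¹| := by rw [im_add_inv, abs_mul]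
    _ ≤ ‖v‖ * |1 - (‖v‖ ^ 2)⁻¹| := by gcongr; exact abs_im_le_norm v
    _ = |‖v‖ - ‖v‖⁻¹| := by
      rw [← abs_of_pos hρ, ← abs_mul, abs_of_pos hρ]; congr 1; field_simp

end Complex

theorem le_of_sub_inv_le_sub_inv {a r : ℝ} (hr : 0 < r) (h : a - a⁻¹ ≤ r - r⁻¹) : a ≤ r := by
  by_contra! hra
  have : a⁻¹ < r⁻¹ := inv_strictAnti₀ hr hra
  linarith

theorem stmt14_general (s : ℝ) (z : ℂ)
    (hz : Real.sqrt s - (Real.sqrt s)⁻¹ ≤ z.im) (c : ℂ)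
    (hc : c ^ 2 = (z ^ 2 / 2 - 1) ^ 2 - 1)
    (hbranch : 1 ≤ ‖z ^ 2 / 2 - 1 + c‖) :
    s ≤ ‖z ^ 2 / 2 - 1 + c‖ := by
  set w := z ^ 2 / 2 - 1 + c with hw
  have hwinv : w⁻¹ = z ^ 2 / 2 - 1 - c := Complex.inv_add_eq_sub_of_sq_eq hc
  have hw0 : w ≠ 0 := by intro h; rw [h] at hbranch; norm_num at hbranch
  obtain ⟨v, hvw, rfl⟩ := Complex.exists_sq_eq_and_eq_add_inv hw0 (by rw [hwinv, hw]; ring)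
  rw [← hvw, norm_pow] at hbranch ⊢
  have hv1 : 1 ≤ ‖v‖ := (one_le_sq_iff₀ (norm_nonneg v)).mp hbranch
  have him : Real.sqrt s - (Real.sqrt s)⁻¹ ≤ ‖v‖ - ‖v‖⁻¹ := by
    calc _ ≤ (v + v⁻¹).im := hz
      _ ≤ |‖v‖ - ‖v‖⁻¹| := (le_abs_self _).trans (Complex.abs_im_add_inv_le v)
      _ = ‖v‖ - ‖v‖⁻¹ := abs_of_nonneg (sub_nonneg.mpr ((inv_le_one_of_one_le₀ hv1).trans hv1))
  exact (Real.sqrt_le_iff.mp (le_of_sub_inv_le_sub_inv (by linarith) him)).2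

/-- Ellipse lemma (α = 1 case): for `s > 1` set `η = √s − 1/√s`.  If
`Im(z) ≥ η`, then `|F(z²/2 − 1)| ≥ s`, where `F(u) = u + √(u²−1)` with the
branch of the square root chosen so that `|F(u)| ≥ 1` (formalized: for any
`c` with `c² = u² − 1` and `1 ≤ |u + c|`, one has `s ≤ |u + c|`). -/
theorem stmt14 (s : ℝ) (hs : 1 < s) (z : ℂ)
    (hz : Real.sqrt s - (Real.sqrt s)⁻¹ ≤ z.im) (c : ℂ)
    (hc : c ^ 2 = (z ^ 2 / 2 - 1) ^ 2 - 1)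
    (hbranch : 1 ≤ ‖z ^ 2 / 2 - 1 + c‖) :
    s ≤ ‖z ^ 2 / 2 - 1 + c‖ :=
  stmt14_general s z hz c hc hbranch
end
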